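/- arXiv:1611.03978 — 5 statements merged into one kernel-verified Lean document; each statement's English description precedes it below -/
import Mathlib

section
/- Let (X,d) be a compact metric space, f : X → X a continuous map, μ an ergodic f-invariant Borel probability measure on X, and X_1,…,X_q compact subsets of X. Suppose f(X_i) ⊂ X_i for 1 ≤ i ≤ q and Ω(f) = ⋃_{i=1}^q X_i, where Ω(f) is the non-wandering set of f. Then there exists an integer 1 ≤ i ≤ q such that μ(X_i) = 1. -/
open MeasureTheory Filter Topology Set
open scoped ENNReal NNReal

attribute [local instance] Classical.propDecidable

noncomputable section

namespace OneWaySpec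

/-! ### Empirical measures and the level-2 large deviation principle -/

/-- The empirical measure `(1/n) ∑_{j<n} δ_{f^j x}` (as a plain measure). -/
noncomputable def empMeas {Y : Type*} [MeasurableSpace Y] (f : Y → Y) (x : Y) (n : ℕ) :
    Measure Y :=
  (n : ℝ≥0∞)⁻¹ • ∑ j ∈ Finset.range n, Measure.dirac (f^[j] x)

lemma empMeas_isProbabilityMeasure {Y : Type*} [MeasurableSpace Y] (f : Y → Y) (x : Y)
    {n : ℕ} (hn : n ≠ 0) : IsProbabilityMeasure (empMeas f x n) := by
  constructor
  rw [empMeas, Measure.smul_apply, Measure.finset_sum_apply]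
  simp only [measure_univ, Finset.sum_const, Finset.card_range, nsmul_eq_mul, mul_one]
  exact ENNReal.inv_mul_cancel (by exact_mod_cast hn) (ENNReal.natCast_ne_top n)

/-- The empirical measure `E_n(x) = (1/n) ∑_{j<n} δ_{f^j x}` as a probability measure
(junk value `δ_x` for `n = 0`). -/
noncomputable def empPM {Y : Type*} [MeasurableSpace Y] (f : Y → Y) (x : Y) (n : ℕ) :
    ProbabilityMeasure Y :=
  if hn : n = 0 then ⟨Measure.dirac x, inferInstance⟩
  else ⟨empMeas f x n, empMeas_isProbabilityMeasure f x hn⟩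

/-- `(X,f)` satisfies a level-2 large deviation principle with reference measure `m`
and rate function `q`. -/
def LevelTwoLDP {Y : Type*} [MeasurableSpace Y] [TopologicalSpace Y] [OpensMeasurableSpace Y]
    (f : Y → Y) (m : Measure Y) (q : ProbabilityMeasure Y → EReal) : Prop :=
  UpperSemicontinuous q ∧ (∀ μ, q μ ≤ 0) ∧
  (∀ G : Set (ProbabilityMeasure Y), IsOpen G →
    ⨆ μ ∈ G, q μ ≤ atTop.liminf fun n : ℕ =>
      (((n : ℝ)⁻¹ : ℝ) : EReal) * ENNReal.log (m {x | empPM f x n ∈ G})) ∧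
  (∀ F : Set (ProbabilityMeasure Y), IsClosed F →
    (atTop.limsup fun n : ℕ =>
      (((n : ℝ)⁻¹ : ℝ) : EReal) * ENNReal.log (m {x | empPM f x n ∈ F})) ≤ ⨆ μ ∈ F, q μ)

/-! ### Measure-theoretic (Kolmogorov–Sinai) entropy and free energy -/

/-- Shannon entropy of the finite partition of `Y` induced by `P : Y → ι`. -/
noncomputable def partEnt {Y : Type*} [MeasurableSpace Y] (μ : Measure Y)
    {ι : Type*} [Fintype ι] (P : Y → ι) : ℝ :=
  ∑ a : ι, Real.negMulLog ((μ (P ⁻¹' {a})).toReal)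

/-- Kolmogorov–Sinai entropy of `μ` for `f` : the supremum over finite measurable partitions
`P` of the limit of `(1/n) H_μ(⋁_{j<n} f^{-j} P)`. -/
noncomputable def ksEntropy {Y : Type*} [MeasurableSpace Y] (f : Y → Y) (μ : Measure Y) :
    EReal :=
  ⨆ (k : ℕ) (P : Y → Fin k) (_ : ∀ a, MeasurableSet (P ⁻¹' {a})),
    atTop.limsup fun n : ℕ =>
      ((((n : ℝ)⁻¹ * partEnt μ fun x => fun j : Fin n => P (f^[j] x)) : ℝ) : EReal)

/-- The free energy `F_φ(μ) = h(μ) - ∫ φ dμ` for `f`-invariant `μ`, and `-∞` otherwise. -/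
noncomputable def freeEnergy {Y : Type*} [MeasurableSpace Y] (f : Y → Y) (φ : Y → ℝ)
    (μ : ProbabilityMeasure Y) : EReal :=
  if (μ : Measure Y).map f = (μ : Measure Y) then
    ksEntropy f (μ : Measure Y) - (((∫ x, φ x ∂(μ : Measure Y)) : ℝ) : EReal)
  else ⊥

/-! ### Non-wandering sets, Bowen balls and the one-way specification properties -/

/-- The non-wandering set of the restriction of `f` to `X` (relative neighborhoods). -/
def nonWanderingIn {Y : Type*} [TopologicalSpace Y] (f : Y → Y) (X : Set Y) : Set Y :=
  {x ∈ X | ∀ U ∈ nhds x, ∃ n > 0, ∃ y ∈ U ∩ X, f^[n] y ∈ U ∩ X}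

/-- Bowen ball `B_n(x,ε)`. -/
def bowenBall {Y : Type*} [PseudoMetricSpace Y] (f : Y → Y) (n : ℕ) (x : Y) (ε : ℝ) :
    Set Y :=
  {y | ∀ j < n, dist (f^[j] x) (f^[j] y) ≤ ε}

/-- `∑_{t<j} (n_t + M_t)`. -/
def gapSum {k : ℕ} (n M : Fin k → ℕ) (j : Fin k) : ℕ :=
  ∑ t ∈ Finset.Iio j, (n t + M t)

/-- One-way specification property of `f` on `X` with the family of sets `Xs`,
with respect to the distance function `d`. -/
def OneWaySpecWithOn {Y : Type*} [TopologicalSpace Y] (d : Y → Y → ℝ) (f : Y → Y)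
    (X : Set Y) {q : ℕ} (Xs : Fin q → Set Y) : Prop :=
  (∀ i, Xs i ⊆ X) ∧ (∀ i, IsCompact (Xs i)) ∧ (∀ i, f '' Xs i ⊆ Xs i) ∧
  nonWanderingIn f X = (⋃ i, Xs i) ∧
  ∀ ε > (0:ℝ), ∃ M : ℕ, ∀ (k : ℕ) (idx : Fin k → Fin q), Monotone idx →
    ∀ x : Fin k → Y, (∀ j, x j ∈ Xs (idx j)) →
    ∀ n : Fin k → ℕ, (∀ j, 1 ≤ n j) →
    ∃ y ∈ X, ∀ (j : Fin k), ∀ i < n j,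
      d (f^[i] (x j)) (f^[i + gapSum n (fun _ => M) j] y) ≤ ε

/-- One-way (W)-specification property of `f` on `X` with the family of sets `Xs`,
with respect to the distance function `d`. -/
def OneWayWSpecWithOn {Y : Type*} [TopologicalSpace Y] (d : Y → Y → ℝ) (f : Y → Y)
    (X : Set Y) {q : ℕ} (Xs : Fin q → Set Y) : Prop :=
  (∀ i, Xs i ⊆ X) ∧ (∀ i, IsCompact (Xs i)) ∧ (∀ i, f '' Xs i ⊆ Xs i) ∧
  nonWanderingIn f X = (⋃ i, Xs i) ∧
  ∀ ε > (0:ℝ), ∃ M : ℕ, ∀ (k : ℕ) (idx : Fin k → Fin q), Monotone idx →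
    ∀ x : Fin k → Y, (∀ j, x j ∈ Xs (idx j)) →
    ∀ n : Fin k → ℕ, (∀ j, 1 ≤ n j) →
    ∃ y ∈ X, ∃ Ms : Fin k → ℕ, (∀ t, Ms t ≤ M) ∧
      ∀ (j : Fin k), ∀ i < n j,
        d (f^[i] (x j)) (f^[i + gapSum n Ms j] y) ≤ ε

/-- One-way specification property of `f` on `X`. -/
def OneWaySpecOn {Y : Type*} [TopologicalSpace Y] (d : Y → Y → ℝ) (f : Y → Y)
    (X : Set Y) : Prop :=
  ∃ (q : ℕ) (Xs : Fin q → Set Y), OneWaySpecWithOn d f X Xs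

/-- One-way (W)-specification property of `f` on `X`. -/
def OneWayWSpecOn {Y : Type*} [TopologicalSpace Y] (d : Y → Y → ℝ) (f : Y → Y)
    (X : Set Y) : Prop :=
  ∃ (q : ℕ) (Xs : Fin q → Set Y), OneWayWSpecWithOn d f X Xs

/-! ### Symbolic dynamics -/

/-- The one-sided shift map. -/
def shift {A : Type*} : (ℕ → A) → (ℕ → A) := fun ω n => ω (n + 1)

/-- The standard metric `d(ω,ω') = 2^{-min{k : ω_k ≠ ω'_k}}` on sequence spaces. -/
noncomputable def seqDist {A : Type*} [DecidableEq A] (x y : ℕ → A) : ℝ :=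
  if h : x = y then 0 else (2 : ℝ)⁻¹ ^ Nat.find (Function.ne_iff.mp h)

/-- The (ambient) cylinder set of a finite word `w`. -/
def cylO {A : Type*} (w : List A) : Set (ℕ → A) :=
  {ω | ∀ (k : ℕ) (h : k < w.length), ω k = w.get ⟨k, h⟩}

/-- `w` belongs to the language of the subshift `X`. -/
def InLang {A : Type*} (X : Set (ℕ → A)) (w : List A) : Prop :=
  (X ∩ cylO w).Nonempty

/-- The concatenation `w_0 v_0 w_1 v_1 ⋯ v_{k-2} w_{k-1}`. -/
def joinWords {A : Type*} {k : ℕ} (w v : Fin k → List A) : List A :=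
  (List.ofFn fun j : Fin k => if (j : ℕ) = k - 1 then w j else w j ++ v j).flatten

end OneWaySpec
namespace OneWaySpec

/-! ### The `(-β)`-transformation -/

/-- `b = max{k ∈ ℤ : k < β}` for `β > 1`. -/
noncomputable def bOf (β : ℝ) : ℕ := ⌈β⌉₊ - 1

/-- The map `x ↦ -βx + ⌊βx⌋ + 1`, which agrees with the `(-β)`-transformation away from
the branch points `{0, 1/β, …, b/β, 1}`. -/
noncomputable def Tpre (β : ℝ) (x : ℝ) : ℝ := -(β * x) + ⌊β * x⌋ + 1

/-- Symbol of `x`: the `i` with `x ∈ I_i = (i/β, (i+1)/β)` (junk at branch points). -/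
noncomputable def symI (β : ℝ) (x : ℝ) : ℕ := (⌊β * x⌋).toNat

/-- The branch-point set `{0, 1/β, …, b/β, 1}`. -/
def bdry (β : ℝ) : Set ℝ := {y | ∃ i : ℕ, i ≤ bOf β ∧ y = (i : ℝ) / β} ∪ {1}

/-- Points of `[0,1]` whose orbit never meets the branch points. -/
def goodPre (β : ℝ) : Set ℝ := {x ∈ Set.Icc (0:ℝ) 1 | ∀ k : ℕ, (Tpre β)^[k] x ∉ bdry β}

/-- Itinerary of a good point. -/
noncomputable def itinPre (β : ℝ) (x : ℝ) : ℕ → ℕ := fun k => symI β ((Tpre β)^[k] x)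

/-- `i'(1)`, the coordinatewise limit of the itineraries `i'(x)` of good points as `x → 1⁻`. -/
noncomputable def itinOne (β : ℝ) : ℕ → ℕ := fun k =>
  limUnder (nhdsWithin 1 (Set.Iio 1) ⊓ Filter.principal (goodPre β))
    (fun x => itinPre β x k)

/-- `i'(1)` is of the form `(w0)^∞`. -/
def CaseOne (β : ℝ) : Prop :=
  ∃ p : ℕ, 1 ≤ p ∧ (∀ k, itinOne β (k + p) = itinOne β k) ∧ itinOne β (p - 1) = 0

/-- The `(-β)`-transformation `T_{-β} : [0,1] → [0,1]` (as a map of `ℝ`). -/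
noncomputable def negBeta (β : ℝ) (x : ℝ) : ℝ :=
  if x = 1 then -β + bOf β + 1
  else if ∃ i : ℕ, 1 ≤ i ∧ i ≤ bOf β ∧ x = (i : ℝ) / β then (if CaseOne β then 0 else 1)
  else Tpre β x

/-- Points of `[0,1]` whose `T_{-β}`-orbit never meets the branch points. -/
def goodSet (β : ℝ) : Set ℝ := {x ∈ Set.Icc (0:ℝ) 1 | ∀ k : ℕ, (negBeta β)^[k] x ∉ bdry β}

/-- The itinerary `i'(x)` of a point under `T_{-β}`. -/
noncomputable def itin (β : ℝ) (x : ℝ) : ℕ → ℕ := fun k => symI β ((negBeta β)^[k] x)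

/-- The symbolic space `Σ_{-β}` of the `(-β)`-transformation. -/
def SigmaNegBeta (β : ℝ) : Set (ℕ → ℕ) := closure (itin β '' goodSet β)

/-- The strict alternating order on sequences. -/
def altLt (x y : ℕ → ℕ) : Prop :=
  ∃ n : ℕ, (∀ k < n, x k = y k) ∧ (if Even n then y n < x n else x n < y n)

/-- The alternating order on sequences. -/
def altLe (x y : ℕ → ℕ) : Prop := altLt x y ∨ x = y

/-- `β` is a Yrrap number: the orbit of `1` under `T_{-β}` is eventually periodic,
i.e. `i'(1)` is eventually periodic. -/
def Yrrap (β : ℝ) : Prop :=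
  ∃ u v : ℕ, 1 ≤ v ∧ ∀ k, u ≤ k → itinOne β (k + v) = itinOne β k

/-- Symbol of `x` for the half-open partition `{J_0, …, J_b}`. -/
noncomputable def symJ (β : ℝ) (x : ℝ) : ℕ :=
  if CaseOne β then (if x ≤ 1 / β then 0 else (⌈β * x⌉).toNat - 1)
  else (if x = 1 then bOf β else (⌊β * x⌋).toNat)

/-- The coding map `Φ : [0,1] → Σ_{-β}`, `(Φ x)_k = j ↔ T_{-β}^k x ∈ J_j`. -/
noncomputable def PhiMap (β : ℝ) (x : ℝ) : ℕ → ℕ := fun k => symJ β ((negBeta β)^[k] x)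

/-- `L_{-β} = L ∘ Φ^{-1}`, as a set function. -/
noncomputable def LnegBeta (β : ℝ) (s : Set (ℕ → ℕ)) : ℝ≥0∞ :=
  volume (Set.Icc (0:ℝ) 1 ∩ PhiMap β ⁻¹' s)

/-- The `(-β)`-transformation as a self-map of `[0,1]`. -/
noncomputable def negBetaI (β : ℝ) (x : Set.Icc (0:ℝ) 1) : Set.Icc (0:ℝ) 1 :=
  Set.projIcc 0 1 zero_le_one (negBeta β x)

/-- Lebesgue measure on `[0,1]`. -/
noncomputable def lebIcc : Measure (Set.Icc (0:ℝ) 1) :=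
  volume.comap Subtype.val

/-! ### Piecewise expanding interval maps and their symbolic spaces -/

/-- Symbol of `x ∈ I_j = (a_j, a_{j+1})`. -/
noncomputable def symA {p : ℕ} (a : Fin (p + 1) → ℝ) (x : ℝ) : ℕ :=
  (Finset.univ.filter fun i => a i < x).card - 1

/-- Points of `[0,1]` whose orbit never meets the branch points `S = {a_0,…,a_p}`. -/
def goodA {p : ℕ} (a : Fin (p + 1) → ℝ) (f : ℝ → ℝ) : Set ℝ :=
  {x ∈ Set.Icc (0:ℝ) 1 | ∀ (k : ℕ) (i : Fin (p + 1)), f^[k] x ≠ a i}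

/-- The itinerary of a point. -/
noncomputable def itinA {p : ℕ} (a : Fin (p + 1) → ℝ) (f : ℝ → ℝ) (x : ℝ) : ℕ → ℕ :=
  fun k => symA a (f^[k] x)

/-- The symbolic space `Σ_f` of a piecewise expanding interval map. -/
def SigmaA {p : ℕ} (a : Fin (p + 1) → ℝ) (f : ℝ → ℝ) : Set (ℕ → ℕ) :=
  closure (itinA a f '' goodA a f)

/-! ### A metric for the weak topology on measures -/

/-- The metric `D(μ,ν) = ∑_{k≥1} |∫φ_k dμ - ∫φ_k dν| / (2^{k+1}‖φ_k‖)` (indexed from `0`). -/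
noncomputable def Dmeas {Y : Type*} [MeasurableSpace Y] [TopologicalSpace Y] [CompactSpace Y]
    (φs : ℕ → C(Y, ℝ)) (μ ν : Measure Y) : ℝ :=
  ∑' k : ℕ, |(∫ x, φs k x ∂μ) - ∫ x, φs k x ∂ν| / (2 ^ (k + 2) * ‖φs k‖)

end OneWaySpec
namespace OneWaySpec

/-! ### Further auxiliary definitions -/

/-- The restriction of the shift to a shift-invariant subset. -/
def shiftRes {A : Type*} (X : Set (ℕ → A)) (h : ∀ ω ∈ X, shift ω ∈ X) : X → X :=
  fun ω => ⟨shift ω.1, h ω.1 ω.2⟩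

/-- The prefix `s_0 s_1 ⋯ s_{m-1}` of a sequence. -/
def pref (s : ℕ → ℕ) (m : ℕ) : List ℕ := (List.range m).map s

/-- The five-branch piecewise linear map of Example 3.1. -/
noncomputable def exMap (x : ℝ) : ℝ :=
  if x < 1 / 6 then 3 * x
  else if x < 1 / 2 then 3 * x - 1 / 2
  else if x < 2 / 3 then 3 * x - 1
  else if x < 5 / 6 then 3 * x - 3 / 2
  else 3 * x - 2

/-- The branch points of `exMap`. -/
noncomputable def a6 : Fin 6 → ℝ := ![0, 1 / 6, 1 / 2, 2 / 3, 5 / 6, 1]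

/-- `exMap` as a self-map of `[0,1]`. -/
noncomputable def exMapI (x : Set.Icc (0:ℝ) 1) : Set.Icc (0:ℝ) 1 :=
  Set.projIcc 0 1 zero_le_one (exMap x)

/-- `sin (2πθ)` as a function on the circle `ℝ/ℤ`. -/
noncomputable def sinC : AddCircle (1:ℝ) → ℝ :=
  Function.Periodic.lift (f := fun t : ℝ => Real.sin (2 * Real.pi * t)) (c := 1)
    (fun x => by
      simp only
      rw [show 2 * Real.pi * (x + 1) = 2 * Real.pi * x + 2 * Real.pi by ring,
        Real.sin_add_two_pi])

/-- `cos (2πθ)` as a function on the circle `ℝ/ℤ`. -/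
noncomputable def cosC : AddCircle (1:ℝ) → ℝ :=
  Function.Periodic.lift (f := fun t : ℝ => Real.cos (2 * Real.pi * t)) (c := 1)
    (fun x => by
      simp only
      rw [show 2 * Real.pi * (x + 1) = 2 * Real.pi * x + 2 * Real.pi by ring,
        Real.cos_add_two_pi])

/-- The circle map `f(θ) = θ + (1/10) sin (2πθ)` of Example 3.2. -/
noncomputable def circleF (θ : AddCircle (1:ℝ)) : AddCircle (1:ℝ) :=
  θ + ((1 / 10 * sinC θ : ℝ) : AddCircle (1:ℝ))

/-- The potential `φ = max{log f', 0}` for the circle map, `f'(θ) = 1 + (π/5) cos (2πθ)`. -/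
noncomputable def circlePhi (θ : AddCircle (1:ℝ)) : ℝ :=
  max (Real.log (1 + Real.pi / 5 * cosC θ)) 0

/-- `g_β(w)`: the minimal `i ≥ 0` such that there are a word `v` of length `i` and symbols
`0 ≤ c < d ≤ b` with `wvc, wvd` in the language of `Σ_{-β}`. -/
noncomputable def gbw (β : ℝ) (w : List ℕ) : ℕ :=
  sInf {i : ℕ | ∃ v : List ℕ, v.length = i ∧ ∃ c d : ℕ, c < d ∧ d ≤ bOf β ∧
    InLang (SigmaNegBeta β) (w ++ v ++ [c]) ∧ InLang (SigmaNegBeta β) (w ++ v ++ [d])}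

/-- `g_β(n) = sup { g_β(w) : w in the language of `Σ_{-β}`, |w| = n }`. -/
noncomputable def gbn (β : ℝ) (n : ℕ) : ℕ :=
  sSup {m : ℕ | ∃ w : List ℕ, w.length = n ∧ InLang (SigmaNegBeta β) w ∧ m = gbw β w}

end OneWaySpec
open OneWaySpec in
theorem MeasureTheory.Conservative.ae_mem_nonWanderingIn_univ {α : Type*}
    [TopologicalSpace α] [SecondCountableTopology α] [MeasurableSpace α]
    [OpensMeasurableSpace α] {f : α → α} {μ : Measure α} (hf : Conservative f μ) :
    ∀ᵐ x ∂μ, x ∈ nonWanderingIn f univ := by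
  filter_upwards [hf.ae_frequently_mem_of_mem_nhds] with x hx
  refine ⟨mem_univ x, fun U hU => ?_⟩
  obtain ⟨n, hnU, hn⟩ := ((hx U hU).and_eventually (eventually_ge_atTop 1)).exists
  exact ⟨n, hn, x, ⟨mem_of_mem_nhds hU, mem_univ x⟩, hnU, mem_univ _⟩

theorem Ergodic.measure_eq_zero_or_one_of_image_subset {α : Type*} [MeasurableSpace α]
    {f : α → α} {μ : Measure α} [IsProbabilityMeasure μ] {s : Set α} (hf : Ergodic f μ)
    (hs : NullMeasurableSet s μ) (hfs : f '' s ⊆ s) : μ s = 0 ∨ μ s = 1 := by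
  rcases hf.ae_empty_or_univ_of_image_ae_le hs hfs.eventuallyLE with h | h
  · exact .inl (by simpa using measure_congr h)
  · exact .inr (by simpa using measure_congr h)

open OneWaySpec in
theorem ergodic_full_measure_on_piece_general
    {X : Type*} [MetricSpace X] [CompactSpace X] [MeasurableSpace X] [BorelSpace X]
    (f : X → X)
    (μ : Measure X) [IsProbabilityMeasure μ] (hμ : Ergodic f μ)
    (q : ℕ) (Xs : Fin q → Set X)
    (hcomp : ∀ i, IsCompact (Xs i))
    (hinv : ∀ i, f '' Xs i ⊆ Xs i)
    (hΩ : nonWanderingIn f Set.univ = ⋃ i, Xs i) :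
    ∃ i : Fin q, μ (Xs i) = 1 := by
  have hmeas : ∀ i, MeasurableSet (Xs i) := fun i => (hcomp i).isClosed.measurableSet
  have hunion : μ (⋃ i, Xs i) = 1 := by
    rw [← measure_univ (μ := μ), ← hΩ,
      ← ae_mem_iff_measure_eq (hΩ ▸ MeasurableSet.iUnion hmeas).nullMeasurableSet]
    exact hμ.toMeasurePreserving.conservative.ae_mem_nonWanderingIn_univ
  obtain ⟨i, hi⟩ : ∃ i, μ (Xs i) ≠ 0 := by
    by_contra! h
    simp [measure_iUnion_null h] at hunion
  exact ⟨i, (hμ.measure_eq_zero_or_one_of_image_subset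
    (hmeas i).nullMeasurableSet (hinv i)).resolve_left hi⟩

open OneWaySpec in
/-- **Lemma 2.3.** If `f(Xᵢ) ⊆ Xᵢ` for compact sets `X₁,…,X_q` whose union is the
non-wandering set `Ω(f)`, then every ergodic `f`-invariant measure gives full measure to
some `Xᵢ`. -/
theorem ergodic_full_measure_on_piece
    {X : Type*} [MetricSpace X] [CompactSpace X] [MeasurableSpace X] [BorelSpace X]
    (f : X → X) (hf : Continuous f)
    (μ : Measure X) [IsProbabilityMeasure μ] (hμ : Ergodic f μ)
    (q : ℕ) (Xs : Fin q → Set X)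
    (hcomp : ∀ i, IsCompact (Xs i))
    (hinv : ∀ i, f '' Xs i ⊆ Xs i)
    (hΩ : nonWanderingIn f Set.univ = ⋃ i, Xs i) :
    ∃ i : Fin q, μ (Xs i) = 1 :=
  ergodic_full_measure_on_piece_general f μ hμ q Xs hcomp hinv hΩ
end
end

section
/- Let (X,σ) be a subshift on a finite alphabet. Then (X,σ) satisfies the one-way specification property if and only if there exist subshifts X_1,…,X_q ⊂ X and an integer M ≥ 0 such that Ω(σ|_X) = ⋃_{i=1}^q Ω(σ|_{X_i}), and for any words w_1 ∈ L(X_{i(1)}),…,w_k ∈ L(X_{i(k)}) with i(1) ≤ ⋯ ≤ i(k), there exist words v_1,…,v_{k−1} ∈ L_M(X) (each of length exactly M) such that w_1 v_1 w_2 v_2 ⋯ w_{k−1} v_{k−1} w_k ∈ L(X). -/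
open MeasureTheory Filter Topology Set
open scoped ENNReal NNReal

attribute [local instance] Classical.propDecidable

noncomputable section

namespace OneWaySpec

/-! ### Auxiliary lemmas for Proposition 2.5 (1) -/

section Aux

variable {A : Type*}

lemma shift_iterate (a : ℕ) (ω : ℕ → A) (n : ℕ) : shift^[a] ω n = ω (n + a) := by
  induction a generalizing ω with
  | zero => rfl
  | succ a ih =>
    rw [Function.iterate_succ_apply]
    exact ih (shift ω)

lemma continuous_shift [TopologicalSpace A] : Continuous (shift (A := A)) :=
  continuous_pi fun n => continuous_apply (n + 1)

lemma iterate_mem_of_shiftInv {X : Set (ℕ → A)} (hX : ∀ ω ∈ X, shift ω ∈ X) (a : ℕ)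
    {ω : ℕ → A} (hω : ω ∈ X) : shift^[a] ω ∈ X := by
  induction a with
  | zero => exact hω
  | succ a ih => rw [Function.iterate_succ_apply']; exact hX _ ih

lemma cylO_nil : cylO ([] : List A) = Set.univ := by
  ext ω
  simp [cylO]

lemma mem_cylO_iff {w : List A} {ω : ℕ → A} :
    ω ∈ cylO w ↔ ∀ (k : ℕ) (h : k < w.length), ω k = w[k] := Iff.rfl

lemma mem_cylO_append {u v : List A} {ω : ℕ → A} :
    ω ∈ cylO (u ++ v) ↔ ω ∈ cylO u ∧ shift^[u.length] ω ∈ cylO v := by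
  simp only [mem_cylO_iff]
  constructor
  · intro h
    constructor
    · intro k hk
      have h3 := h k (by simp; omega)
      rwa [List.getElem_append_left hk] at h3
    · intro k hk
      have h3 := h (u.length + k) (by simp; omega)
      rw [List.getElem_append_right (by omega)] at h3
      simp only [Nat.add_sub_cancel_left] at h3
      rw [shift_iterate, Nat.add_comm k u.length]
      exact h3
  · rintro ⟨h1, h2⟩ k hk
    rw [List.length_append] at hk
    by_cases hku : k < u.length
    · rw [List.getElem_append_left hku]
      exact h1 k hku
    · have h3 := h2 (k - u.length) (by omega)
      rw [shift_iterate, Nat.sub_add_cancel (by omega)] at h3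
      rw [List.getElem_append_right (by omega)]
      exact h3

lemma mem_cylO_map_range {m : ℕ} (ω : ℕ → A) : ω ∈ cylO ((List.range m).map ω) := by
  refine mem_cylO_iff.mpr fun k hk => ?_
  simp

lemma length_map_range {m : ℕ} (ω : ℕ → A) : ((List.range m).map ω).length = m := by simp

lemma seqDist_le_pow [DecidableEq A] {u v : ℕ → A} {m : ℕ}
    (h : ∀ l < m, u l = v l) : seqDist u v ≤ (2 : ℝ)⁻¹ ^ m := by
  rw [seqDist]
  split
  · positivity
  · rename_i hne
    refine pow_le_pow_of_le_one (by norm_num) (by norm_num) ?_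
    refine (Nat.le_find_iff _ _).mpr fun l hl hne' => hne' (h l hl)

lemma apply_zero_eq_of_seqDist_le_half [DecidableEq A] {u v : ℕ → A}
    (h : seqDist u v ≤ (2 : ℝ)⁻¹) : u 0 = v 0 := by
  rw [seqDist] at h
  split at h
  · rename_i he; rw [he]
  · rename_i hne
    by_contra hc
    have h0 : Nat.find (Function.ne_iff.mp hne) = 0 :=
      Nat.eq_zero_of_le_zero (Nat.find_le hc)
    rw [h0, pow_zero] at h
    norm_num at h

lemma gapSum_zero {k : ℕ} (n M : Fin (k + 1) → ℕ) : gapSum n M 0 = 0 := by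
  have he : Finset.Iio (0 : Fin (k + 1)) = ∅ := by
    ext t
    simp
  rw [gapSum, he, Finset.sum_empty]

lemma gapSum_const {k n M : ℕ} (j : Fin k) :
    gapSum (fun _ => n) (fun _ => M) j = (j : ℕ) * (n + M) := by
  rw [gapSum, Finset.sum_const, Fin.card_Iio, smul_eq_mul]

lemma gapSum_congr {k : ℕ} {n M n' M' : Fin k → ℕ} {j : Fin k}
    (h : ∀ t, t < j → n t + M t = n' t + M' t) :
    gapSum n M j = gapSum n' M' j :=
  Finset.sum_congr rfl fun t ht => h t (Finset.mem_Iio.mp ht)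

lemma gapSum_succ {k : ℕ} (n M : Fin (k + 1) → ℕ) (j : Fin k) :
    gapSum n M j.succ
      = (n 0 + M 0) + gapSum (fun t => n t.succ) (fun t => M t.succ) j := by
  have h1 : ∀ {m : ℕ} (G : Fin m → ℕ) (i : Fin m),
      ∑ t ∈ Finset.Iio i, G t = ∑ t : Fin m, if t < i then G t else 0 := by
    intro m G i
    rw [← Finset.sum_filter]
    congr 1
    ext t
    simp [Finset.mem_Iio]
  rw [gapSum, gapSum, h1, h1, Fin.sum_univ_succ, if_pos (Fin.succ_pos j)]
  congr 1
  apply Finset.sum_congr rfl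
  intro t _
  simp only [Fin.succ_lt_succ_iff]

lemma joinWords_zero (w v : Fin 0 → List A) : joinWords w v = [] := by
  simp [joinWords]

lemma joinWords_one (w v : Fin 1 → List A) : joinWords w v = w 0 := by
  simp [joinWords]

lemma joinWords_succ {k : ℕ} (hk : k ≠ 0) (w v : Fin (k + 1) → List A) :
    joinWords w v
      = (w 0 ++ v 0) ++ joinWords (fun t => w t.succ) (fun t => v t.succ) := by
  have hjf : (List.flatten : List (List A) → List A) = List.flatten := rfl
  rw [joinWords, joinWords, List.ofFn_succ, List.flatten_cons]
  congr 1
  · rw [if_neg]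
    intro hcon
    simp only [Fin.val_zero] at hcon
    omega
  · refine congrArg List.flatten (congrArg List.ofFn ?_)
    funext t
    have hval : ((t.succ : Fin (k + 1)) : ℕ) = (t : ℕ) + 1 := rfl
    by_cases ht : (t : ℕ) = k - 1
    · rw [if_pos (by rw [hval]; omega), if_pos ht]
    · rw [if_neg (by rw [hval]; omega), if_neg ht]

lemma mem_cylO_joinWords_of :
    ∀ {k : ℕ} (w v : Fin k → List A) (ω : ℕ → A),
    (∀ j : Fin k,
      shift^[gapSum (fun t => (w t).length) (fun t => (v t).length) j] ω ∈ cylO (w j)) →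
    (∀ j : Fin k, (j : ℕ) < k - 1 →
      shift^[gapSum (fun t => (w t).length) (fun t => (v t).length) j + (w j).length] ω
        ∈ cylO (v j)) →
    ω ∈ cylO (joinWords w v) := by
  intro k
  induction k with
  | zero =>
    intro w v ω _ _
    rw [joinWords_zero, cylO_nil]
    trivial
  | succ k ih =>
    intro w v ω hw hv
    rcases Nat.eq_zero_or_pos k with hk | hk
    · subst hk
      rw [joinWords_one]
      have h0 := hw 0
      rwa [gapSum_zero, Function.iterate_zero_apply] at h0
    · have hk0 : k ≠ 0 := by omega
      rw [joinWords_succ hk0, mem_cylO_append, mem_cylO_append]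
      refine ⟨⟨?_, ?_⟩, ?_⟩
      · have h0 := hw 0
        rwa [gapSum_zero, Function.iterate_zero_apply] at h0
      · have h0 := hv 0 (by simp only [Fin.val_zero]; omega)
        rwa [gapSum_zero, Nat.zero_add] at h0
      · rw [List.length_append]
        apply ih (fun t => w t.succ) (fun t => v t.succ)
        · intro j
          have hj := hw j.succ
          have e : gapSum (fun t => (w t).length) (fun t => (v t).length) j.succ
              = gapSum (fun t => (w t.succ).length) (fun t => (v t.succ).length) j
                + ((w 0).length + (v 0).length) := by
            rw [gapSum_succ]; exact Nat.add_comm _ _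
          rw [e, Function.iterate_add_apply] at hj
          exact hj
        · intro j hjlt
          have hj := hv j.succ (by
            have hval : ((j.succ : Fin (k + 1)) : ℕ) = (j : ℕ) + 1 := rfl
            rw [hval]; omega)
          have e : gapSum (fun t => (w t).length) (fun t => (v t).length) j.succ
                + (w j.succ).length
              = (gapSum (fun t => (w t.succ).length) (fun t => (v t.succ).length) j
                + (w j.succ).length) + ((w 0).length + (v 0).length) := by
            rw [gapSum_succ]; ring
          rw [e, Function.iterate_add_apply] at hj
          exact hj

lemma cylO_joinWords_block :
    ∀ {k : ℕ} (w v : Fin k → List A) (ω : ℕ → A),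
    ω ∈ cylO (joinWords w v) → ∀ j : Fin k,
    shift^[gapSum (fun t => (w t).length) (fun t => (v t).length) j] ω ∈ cylO (w j) := by
  intro k
  induction k with
  | zero => intro w v ω h j; exact j.elim0
  | succ k ih =>
    intro w v ω h j
    rcases Nat.eq_zero_or_pos k with hk | hk
    · subst hk
      rw [joinWords_one] at h
      have hj : j = 0 := Fin.fin_one_eq_zero j
      subst hj
      rw [gapSum_zero]
      exact h
    · have hk0 : k ≠ 0 := by omega
      rw [joinWords_succ hk0, mem_cylO_append, mem_cylO_append, List.length_append] at h
      obtain ⟨⟨h1, _⟩, h3⟩ := h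
      rcases Fin.eq_zero_or_eq_succ j with rfl | ⟨j', rfl⟩
      · rw [gapSum_zero]
        exact h1
      · have hh := ih (fun t => w t.succ) (fun t => v t.succ) _ h3 j'
        have e : gapSum (fun t => (w t).length) (fun t => (v t).length) j'.succ
            = gapSum (fun t => (w t.succ).length) (fun t => (v t.succ).length) j'
              + ((w 0).length + (v 0).length) := by
          rw [gapSum_succ]; exact Nat.add_comm _ _
        rw [e, Function.iterate_add_apply]
        exact hh

end Aux

section NonWandering

variable {Y : Type*} [TopologicalSpace Y]

lemma nonWanderingIn_subset (f : Y → Y) (S : Set Y) : nonWanderingIn f S ⊆ S :=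
  fun _ hx => hx.1

lemma nonWanderingIn_mono (f : Y → Y) {S T : Set Y} (h : S ⊆ T) :
    nonWanderingIn f S ⊆ nonWanderingIn f T := by
  rintro x ⟨hxS, hx⟩
  refine ⟨h hxS, fun U hU => ?_⟩
  obtain ⟨n, hn, y, hy, hfy⟩ := hx U hU
  exact ⟨n, hn, y, ⟨hy.1, h hy.2⟩, hfy.1, h hfy.2⟩

lemma isClosed_nonWanderingIn {f : Y → Y} {S : Set Y} (hS : IsClosed S) :
    IsClosed (nonWanderingIn f S) := by
  rw [← isOpen_compl_iff]
  rw [isOpen_iff_mem_nhds]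
  intro x hx
  by_cases hxS : x ∈ S
  · have hfail : ¬ ∀ U ∈ nhds x, ∃ n > 0, ∃ y ∈ U ∩ S, f^[n] y ∈ U ∩ S := by
      intro hc
      exact hx ⟨hxS, hc⟩
    push_neg at hfail
    obtain ⟨U, hU, hUfail⟩ := hfail
    refine Filter.mem_of_superset (interior_mem_nhds.mpr hU) ?_
    intro x' hx' hx'mem
    obtain ⟨n, hn, y, hy, hfy⟩ := hx'mem.2 U
      (Filter.mem_of_superset (isOpen_interior.mem_nhds hx') interior_subset)
    exact (hUfail n hn y hy) hfy
  · refine Filter.mem_of_superset (hS.isOpen_compl.mem_nhds hxS) ?_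
    intro x' hx' hx'mem
    exact hx' hx'mem.1

lemma map_mem_nonWanderingIn {f : Y → Y} (hf : Continuous f) {S : Set Y}
    (hS : ∀ y ∈ S, f y ∈ S) {x : Y} (hx : x ∈ nonWanderingIn f S) :
    f x ∈ nonWanderingIn f S := by
  obtain ⟨hxS, hxw⟩ := hx
  refine ⟨hS x hxS, fun U hU => ?_⟩
  obtain ⟨n, hn, y, ⟨hyU, hyS⟩, hfyU, hfyS⟩ :=
    hxw (f ⁻¹' U) (hf.continuousAt.preimage_mem_nhds hU)
  refine ⟨n, hn, f y, ⟨hyU, hS y hyS⟩, ?_⟩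
  have hcomm : f^[n] (f y) = f (f^[n] y) := by
    rw [← Function.iterate_succ_apply, Function.iterate_succ_apply']
  rw [hcomm]
  exact ⟨hfyU, hS _ hfyS⟩

lemma exists_recurrent {g : Y → Y} (hg : Continuous g)
    {S : Set Y} (hcpt : IsCompact S) (hcl : IsClosed S) (hne : S.Nonempty)
    (hinv : ∀ y ∈ S, g y ∈ S) :
    ∃ z ∈ S, z ∈ closure (Set.range fun m : ℕ => g^[m + 1] z) := by
  set 𝒮 : Set (Set Y) := {T | T ⊆ S ∧ T.Nonempty ∧ IsClosed T ∧ ∀ y ∈ T, g y ∈ T} with h𝒮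
  have hlb : ∀ c ⊆ 𝒮, IsChain (· ⊆ ·) c → c.Nonempty → ∃ lb ∈ 𝒮, ∀ s ∈ c, lb ⊆ s := by
    intro c hcsub hchain hcne
    refine ⟨⋂₀ c, ⟨?_, ?_, ?_, ?_⟩, fun s hs => Set.sInter_subset_of_mem hs⟩
    · obtain ⟨t, ht⟩ := hcne
      exact (Set.sInter_subset_of_mem ht).trans (hcsub ht).1
    · haveI : Nonempty c := hcne.to_subtype
      apply IsCompact.nonempty_sInter_of_directed_nonempty_isCompact_isClosed
      · exact IsChain.directedOn hchain.symm
      · exact fun U hU => (hcsub hU).2.1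
      · exact fun U hU => hcpt.of_isClosed_subset (hcsub hU).2.2.1 (hcsub hU).1
      · exact fun U hU => (hcsub hU).2.2.1
    · exact isClosed_sInter fun t ht => (hcsub ht).2.2.1
    · intro y hy
      rw [Set.mem_sInter] at hy ⊢
      exact fun t ht => (hcsub ht).2.2.2 y (hy t ht)
  obtain ⟨W, hWsub, hWmin⟩ := zorn_superset_nonempty 𝒮 hlb S ⟨Set.Subset.rfl, hne, hcl, hinv⟩
  obtain ⟨hWS, ⟨z, hzW⟩, hWcl, hWinv⟩ := hWmin.prop
  refine ⟨z, hWS hzW, ?_⟩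
  have horb : ∀ m : ℕ, g^[m] z ∈ W := by
    intro m
    induction m with
    | zero => exact hzW
    | succ m ih => rw [Function.iterate_succ_apply']; exact hWinv _ ih
  have hsubW : closure (Set.range fun m : ℕ => g^[m + 1] z) ⊆ W :=
    closure_minimal (by rintro _ ⟨m, rfl⟩; exact horb (m + 1)) hWcl
  have hmem : closure (Set.range fun m : ℕ => g^[m + 1] z) ∈ 𝒮 := by
    refine ⟨hsubW.trans hWS, ⟨g z, subset_closure ⟨0, rfl⟩⟩, isClosed_closure, ?_⟩
    intro y hy
    have h1 : g y ∈ g '' closure (Set.range fun m : ℕ => g^[m + 1] z) := ⟨y, hy, rfl⟩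
    have h2 := (image_closure_subset_closure_image hg) h1
    refine closure_mono ?_ h2
    rintro _ ⟨_, ⟨m, rfl⟩, rfl⟩
    exact ⟨m + 1, Function.iterate_succ_apply' g (m + 1) z⟩
  exact (hWmin.2 hmem hsubW) hzW

end NonWandering

section SpecNW

lemma spec_nonwandering {N q : ℕ} {X : Set (ℕ → Fin N)} (hXcl : IsClosed X)
    (hXinv : ∀ ω ∈ X, shift ω ∈ X) {Xs : Fin q → Set (ℕ → Fin N)}
    (hΩ : nonWanderingIn shift X = ⋃ i, Xs i)
    (hXsinv : ∀ i, ∀ ω ∈ Xs i, shift ω ∈ Xs i)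
    (hXscl : ∀ i, IsClosed (Xs i))
    {M : ℕ}
    (hM : ∀ (k : ℕ) (idx : Fin k → Fin q), Monotone idx →
      ∀ x : Fin k → (ℕ → Fin N), (∀ j, x j ∈ Xs (idx j)) →
      ∀ n : Fin k → ℕ, (∀ j, 1 ≤ n j) →
      ∃ y ∈ X, ∀ (j : Fin k), ∀ i < n j,
        seqDist (shift^[i] (x j)) (shift^[i + gapSum n (fun _ => M) j] y) ≤ (2 : ℝ)⁻¹)
    {i : Fin q} {x : ℕ → Fin N} (hx : x ∈ Xs i) :
    x ∈ ⋃ l, nonWanderingIn shift (Xs l) := by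
  have key : ∀ n0 : ℕ, ∃ z ∈ ⋃ l, nonWanderingIn shift (Xs l), ∀ l < n0 + 1, z l = x l := by
    intro n0
    set n1 := n0 + 1 with hn1
    set F : ℕ → Set (ℕ → Fin N) := fun k =>
      X ∩ ⋂ j ∈ Finset.range k, ⋂ l ∈ Finset.range n1,
        {y : ℕ → Fin N | y (l + j * (n1 + M)) = x l} with hF
    have hFcl : ∀ k, IsClosed (F k) := fun k =>
      hXcl.inter (isClosed_biInter fun j _ => isClosed_biInter fun l _ =>
        isClosed_eq (continuous_apply _) continuous_const)
    have hFdec : ∀ k, F (k + 1) ⊆ F k := by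
      intro k y hy
      obtain ⟨hy1, hy2⟩ := hy
      refine ⟨hy1, ?_⟩
      simp only [Set.mem_iInter] at hy2 ⊢
      intro j hj l hl
      exact hy2 j (by rw [Finset.mem_range] at hj ⊢; omega) l hl
    have hFne : ∀ k, (F k).Nonempty := by
      intro k
      obtain ⟨y, hyX, hyd⟩ := hM k (fun _ => i) monotone_const (fun _ => x)
        (fun _ => hx) (fun _ => n1) (fun _ => by show 1 ≤ n1; omega)
      refine ⟨y, hyX, ?_⟩
      simp only [Set.mem_iInter]
      intro j hj l hl
      rw [Finset.mem_range] at hj hl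
      have hd := hyd ⟨j, hj⟩ l hl
      have h0 := apply_zero_eq_of_seqDist_le_half hd
      rw [shift_iterate, shift_iterate, Nat.zero_add, Nat.zero_add, gapSum_const] at h0
      exact h0.symm
    obtain ⟨y, hy⟩ := IsCompact.nonempty_iInter_of_sequence_nonempty_isCompact_isClosed
      F hFdec hFne ((hFcl 0).isCompact) hFcl
    rw [Set.mem_iInter] at hy
    have hyX : y ∈ X := (hy 0).1
    have hycoord : ∀ j l, l < n1 → y (l + j * (n1 + M)) = x l := by
      intro j l hl
      have h2 := (hy (j + 1)).2
      simp only [Set.mem_iInter] at h2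
      exact h2 j (by rw [Finset.mem_range]; omega) l (by rw [Finset.mem_range]; omega)
    set g : (ℕ → Fin N) → (ℕ → Fin N) := shift^[n1 + M] with hg
    set S0 : Set (ℕ → Fin N) := closure (Set.range fun j : ℕ => g^[j] y) with hS0
    have hgc : Continuous g := continuous_shift.iterate (n1 + M)
    have hgiter : ∀ j : ℕ, g^[j] y = shift^[(n1 + M) * j] y := by
      intro j
      rw [hg, ← Function.iterate_mul]
    have hS0X : S0 ⊆ X := by
      apply closure_minimal ?_ hXcl
      rintro _ ⟨j, rfl⟩
      show g^[j] y ∈ X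
      rw [hgiter j]
      exact iterate_mem_of_shiftInv hXinv _ hyX
    have hS0C : S0 ⊆ {p : ℕ → Fin N | ∀ l < n1, p l = x l} := by
      apply closure_minimal
      · rintro _ ⟨j, rfl⟩ l hl
        show (g^[j] y) l = x l
        rw [hgiter j, shift_iterate, Nat.mul_comm]
        exact hycoord j l hl
      · have he : {p : ℕ → Fin N | ∀ l < n1, p l = x l}
            = ⋂ l ∈ Finset.range n1, {p : ℕ → Fin N | p l = x l} := by
          ext p
          simp [Finset.mem_range]
        rw [he]
        exact isClosed_biInter fun l _ =>
          isClosed_eq (continuous_apply _) continuous_const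
    have hS0inv : ∀ p ∈ S0, g p ∈ S0 := by
      intro p hp
      have h1 : g p ∈ g '' S0 := ⟨p, hp, rfl⟩
      have h2 := (image_closure_subset_closure_image hgc) h1
      refine closure_mono ?_ h2
      rintro _ ⟨_, ⟨mm, rfl⟩, rfl⟩
      exact ⟨mm + 1, Function.iterate_succ_apply' g mm y⟩
    obtain ⟨z, hzS0, hzrec⟩ := exists_recurrent (g := g) (S := S0) hgc
      isClosed_closure.isCompact isClosed_closure ⟨y, subset_closure ⟨0, rfl⟩⟩ hS0inv
    have hzret : ∀ U ∈ nhds z, ∃ mm : ℕ, g^[mm + 1] z ∈ U := by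
      intro U hU
      obtain ⟨p, hpU, mm, rfl⟩ := mem_closure_iff_nhds.mp hzrec U hU
      exact ⟨mm, hpU⟩
    have hziter : ∀ mm : ℕ, g^[mm + 1] z = shift^[(n1 + M) * (mm + 1)] z := by
      intro mm
      rw [hg, ← Function.iterate_mul]
    have hzX : z ∈ X := hS0X hzS0
    have hzΩ : z ∈ nonWanderingIn shift X := by
      refine ⟨hzX, fun U hU => ?_⟩
      obtain ⟨mm, hmm⟩ := hzret U hU
      refine ⟨(n1 + M) * (mm + 1), Nat.mul_pos (by omega) (by omega), z,
        ⟨mem_of_mem_nhds hU, hzX⟩, ?_, ?_⟩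

      · rw [← hziter mm]
        exact hmm
      · exact iterate_mem_of_shiftInv hXinv _ hzX
    rw [hΩ] at hzΩ
    obtain ⟨l, hzl⟩ := Set.mem_iUnion.mp hzΩ
    refine ⟨z, Set.mem_iUnion.mpr ⟨l, hzl, fun U hU => ?_⟩,
      fun lc hlc => hS0C hzS0 lc hlc⟩
    obtain ⟨mm, hmm⟩ := hzret U hU
    refine ⟨(n1 + M) * (mm + 1), Nat.mul_pos (by omega) (by omega), z,
      ⟨mem_of_mem_nhds hU, hzl⟩, ?_, ?_⟩
    · rw [← hziter mm]
      exact hmm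
    · exact iterate_mem_of_shiftInv (hXsinv l) _ hzl
  have hclU : IsClosed (⋃ l, nonWanderingIn shift (Xs l)) :=
    isClosed_iUnion_of_finite fun l => isClosed_nonWanderingIn (hXscl l)
  choose z hzmem hzagree using key
  have htend : Filter.Tendsto z Filter.atTop (nhds x) := by
    rw [tendsto_pi_nhds]
    intro c
    apply Filter.Tendsto.congr' ?_ tendsto_const_nhds
    filter_upwards [Filter.eventually_ge_atTop c] with nn hnn
    exact (hzagree nn c (by omega)).symm
  exact hclU.mem_of_tendsto htend (Filter.Eventually.of_forall hzmem)

end SpecNW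




end OneWaySpec

open OneWaySpec in
/-- **Proposition 2.5 (1).** A subshift satisfies the one-way specification property iff
there are subshifts `X₁,…,X_q ⊆ X` and `M ≥ 0` with `Ω(σ|_X) = ⋃ Ω(σ|_{Xᵢ})` such that
words from the languages of the `Xᵢ` (taken in order) can be concatenated with connecting
words of length exactly `M` into a word of the language of `X`. -/
theorem subshift_one_way_spec_iff
    (N : ℕ) (X : Set (ℕ → Fin N)) (hXcl : IsClosed X)
    (hXinv : ∀ ω ∈ X, shift ω ∈ X) :
    OneWaySpecOn (fun ω ω' : ℕ → Fin N => seqDist ω ω') shift X ↔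
    ∃ (q : ℕ) (Xs : Fin q → Set (ℕ → Fin N)) (M : ℕ),
      (∀ i, Xs i ⊆ X) ∧ (∀ i, IsClosed (Xs i)) ∧
      (∀ i, ∀ ω ∈ Xs i, shift ω ∈ Xs i) ∧
      nonWanderingIn shift X = (⋃ i, nonWanderingIn shift (Xs i)) ∧
      ∀ (k : ℕ) (idx : Fin k → Fin q), Monotone idx →
        ∀ w : Fin k → List (Fin N), (∀ j, InLang (Xs (idx j)) (w j)) →
        ∃ v : Fin k → List (Fin N),
          (∀ j : Fin k, (j : ℕ) < k - 1 → InLang X (v j) ∧ (v j).length = M) ∧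
          InLang X (joinWords w v) := by
  constructor
  · rintro ⟨q, Xs, hsub, hcpt, himg, hΩ, hspec⟩
    obtain ⟨M, hM⟩ := hspec (2 : ℝ)⁻¹ (by norm_num)
    have hXscl : ∀ i, IsClosed (Xs i) := fun i => (hcpt i).isClosed
    have hXsinv : ∀ i, ∀ ω ∈ Xs i, shift ω ∈ Xs i := fun i ω hω => himg i ⟨ω, hω, rfl⟩
    refine ⟨q, Xs, M + 1, hsub, hXscl, hXsinv, ?_, ?_⟩
    · apply Set.Subset.antisymm
      · rw [hΩ]
        refine Set.iUnion_subset fun i p hp => ?_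
        exact spec_nonwandering hXcl hXinv hΩ hXsinv hXscl hM hp
      · exact Set.iUnion_subset fun i => nonWanderingIn_mono shift (hsub i)
    · intro k idx hmono w hw
      choose xw hxw using hw
      have hxwX : ∀ j, xw j ∈ Xs (idx j) := fun j => (hxw j).1
      have hxwcyl : ∀ j, xw j ∈ cylO (w j) := fun j => (hxw j).2
      set n : Fin k → ℕ := fun j => (w j).length + 1 with hn
      obtain ⟨y, hyX, hyd⟩ := hM k idx hmono xw hxwX n (fun j => by simp only [hn]; omega)
      set P : Fin k → ℕ := fun j => gapSum n (fun _ => M) j with hP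
      have hyc : ∀ (j : Fin k), ∀ s, s < n j → y (s + P j) = xw j s := by
        intro j s hs
        have hd := hyd j s hs
        have h0 := apply_zero_eq_of_seqDist_le_half hd
        rw [shift_iterate, shift_iterate, Nat.zero_add, Nat.zero_add] at h0
        exact h0.symm
      set v : Fin k → List (Fin N) :=
        fun j => (List.range (M + 1)).map (shift^[P j + (w j).length] y) with hv
      have hPP : ∀ j : Fin k,
          gapSum (fun t => (w t).length) (fun t => (v t).length) j = P j := by
        intro j
        rw [hP]
        apply gapSum_congr
        intro t _
        simp only [hv, hn, List.length_map, List.length_range]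
        omega
      refine ⟨v, ?_, ?_⟩
      · intro j hj
        refine ⟨⟨shift^[P j + (w j).length] y,
            iterate_mem_of_shiftInv hXinv _ hyX, mem_cylO_map_range _⟩, ?_⟩
        simp [hv]
      · refine ⟨y, hyX, ?_⟩
        apply mem_cylO_joinWords_of
        · intro j
          rw [hPP j]
          refine mem_cylO_iff.mpr fun s hs => ?_
          rw [shift_iterate, hyc j s (by simp only [hn]; omega)]
          exact mem_cylO_iff.mp (hxwcyl j) s hs
        · intro j hj
          rw [hPP j]
          exact mem_cylO_map_range _
  · rintro ⟨q, Xs, M, hsub, hXscl, hXsinv, hΩ, hglue⟩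
    refine ⟨q, fun i => nonWanderingIn shift (Xs i),
      fun i => (nonWanderingIn_subset _ _).trans (hsub i),
      fun i => (isClosed_nonWanderingIn (hXscl i)).isCompact, ?_, hΩ, ?_⟩
    · rintro i _ ⟨ω, hω, rfl⟩
      exact map_mem_nonWanderingIn continuous_shift (hXsinv i) hω
    · intro ε hε
      obtain ⟨m, hm⟩ := exists_pow_lt_of_lt_one hε (by norm_num : (2 : ℝ)⁻¹ < 1)
      refine ⟨m + M, ?_⟩
      intro k idx hmono x hx n hn
      set w : Fin k → List (Fin N) := fun j => (List.range (n j + m)).map (x j) with hw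
      have hwlang : ∀ j, InLang (Xs (idx j)) (w j) := fun j =>
        ⟨x j, (hx j).1, mem_cylO_map_range _⟩
      obtain ⟨v, hvlen, hjoin⟩ := hglue k idx hmono w hwlang
      obtain ⟨z, hzX, hzcyl⟩ := hjoin
      refine ⟨z, hzX, ?_⟩
      intro j s hs
      have hgap : gapSum n (fun _ => m + M) j
          = gapSum (fun t => (w t).length) (fun t => (v t).length) j := by
        apply gapSum_congr
        intro t ht
        have htk : (t : ℕ) < k - 1 := by
          have h1 : (t : ℕ) < (j : ℕ) := ht
          have h2 : (j : ℕ) < k := j.isLt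
          omega
        rw [(hvlen t htk).2]
        simp only [hw, List.length_map, List.length_range]
        omega
      have hblock := cylO_joinWords_block w v z hzcyl j
      refine le_trans (seqDist_le_pow (m := m) ?_) hm.le
      intro l hl
      rw [shift_iterate, shift_iterate, hgap]
      have hco := mem_cylO_iff.mp hblock (s + l)
        (by simp only [hw, List.length_map, List.length_range]; omega)
      rw [shift_iterate] at hco
      simp only [hw, List.getElem_map, List.getElem_range] at hco
      rw [show l + (s + gapSum (fun t => (w t).length) (fun t => (v t).length) j)
          = s + l + gapSum (fun t => (w t).length) (fun t => (v t).length) j from by omega,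
        hco]
      exact congrArg (x j) (Nat.add_comm l s)
end
end

section
/- Let (X,σ) be a subshift on a finite alphabet. Then (X,σ) satisfies the one-way (W)-specification property if and only if there exist subshifts X_1,…,X_q ⊂ X and an integer M ≥ 0 such that Ω(σ|_X) = ⋃_{i=1}^q Ω(σ|_{X_i}), and for any words w_1 ∈ L(X_{i(1)}),…,w_k ∈ L(X_{i(k)}) with i(1) ≤ ⋯ ≤ i(k), there exist words v_1,…,v_{k−1} ∈ L(X) with |v_i| ≤ M for 1 ≤ i ≤ k−1 such that w_1 v_1 w_2 v_2 ⋯ w_{k−1} v_{k−1} w_k ∈ L(X). -/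
open MeasureTheory Filter Topology Set
open scoped ENNReal NNReal

attribute [local instance] Classical.propDecidable

noncomputable section

namespace OneWaySpecAux

open OneWaySpec

variable {A : Type*}

lemma shift_iter (ω : ℕ → A) (n c : ℕ) : (shift^[n] ω) c = ω (n + c) := by
  induction n generalizing c with
  | zero => simp
  | succ n ih =>
    rw [Function.iterate_succ_apply', shift, ih]
    ring_nf

lemma mem_iter_of_inv {K : Set (ℕ → A)} (hK : ∀ ω ∈ K, shift ω ∈ K) {ω : ℕ → A}
    (hω : ω ∈ K) (n : ℕ) : shift^[n] ω ∈ K := by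
  induction n with
  | zero => exact hω
  | succ n ih => rw [Function.iterate_succ_apply']; exact hK _ ih

/-- The prefix word of length `m` of a sequence. -/
def prefW (ω : ℕ → A) (m : ℕ) : List A := (List.range m).map ω

@[simp] lemma prefW_length (ω : ℕ → A) (m : ℕ) : (prefW ω m).length = m := by
  simp [prefW]

lemma mem_cylO_iff {w : List A} {ω : ℕ → A} :
    ω ∈ cylO w ↔ ∀ (k : ℕ) (h : k < w.length), ω k = w.get ⟨k, h⟩ := Iff.rfl

lemma mem_cylO_prefW_iff {ω' ω : ℕ → A} {m : ℕ} :
    ω' ∈ cylO (prefW ω m) ↔ ∀ c < m, ω' c = ω c := by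
  constructor
  · intro h c hc
    have := h c (by simpa using hc)
    simpa [prefW] using this
  · intro h k hk
    have hk' : k < m := by simpa using hk
    simp [prefW, h k hk']

lemma self_mem_cylO_prefW (ω : ℕ → A) (m : ℕ) : ω ∈ cylO (prefW ω m) := by
  rw [mem_cylO_prefW_iff]; intro c _; rfl

lemma mem_cylO_iff' {w : List A} {ω : ℕ → A} :
    ω ∈ cylO w ↔ ∀ (k : ℕ) (h : k < w.length), ω k = w[k] := by
  simp [mem_cylO_iff, List.get_eq_getElem]

lemma cylO_append {u v : List A} {ω : ℕ → A} :
    ω ∈ cylO (u ++ v) ↔ ω ∈ cylO u ∧ shift^[u.length] ω ∈ cylO v := by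
  simp only [mem_cylO_iff']
  constructor
  · intro h
    refine ⟨fun k hk => ?_, fun k hk => ?_⟩
    · have hk2 : k < (u ++ v).length := by simp; omega
      have := h k hk2
      rwa [List.getElem_append_left hk] at this
    · have hk' : k < v.length := by simpa using hk
      have hk2 : u.length + k < (u ++ v).length := by simp; omega
      have := h (u.length + k) hk2
      rw [List.getElem_append_right (by omega)] at this
      rw [shift_iter]
      simpa [Nat.add_sub_cancel_left] using this
  · rintro ⟨h1, h2⟩ k hk
    have hk' : k < u.length + v.length := by simpa using hk
    rcases lt_or_ge k u.length with hku | hku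
    · rw [List.getElem_append_left hku]
      exact h1 k hku
    · have hkv : k - u.length < v.length := by omega
      have := h2 (k - u.length) (by simpa using hkv)
      rw [shift_iter] at this
      rw [List.getElem_append_right (by omega)]
      have hco : u.length + (k - u.length) = k := by omega
      rwa [hco] at this


section seqDistLemmas

variable [DecidableEq A]

lemma seqDist_le_pow {x y : ℕ → A} {L : ℕ} (h : ∀ c < L, x c = y c) :
    seqDist x y ≤ (2:ℝ)⁻¹ ^ L := by
  rw [seqDist]
  split
  · positivity
  · rename_i hne
    apply pow_le_pow_of_le_one (by norm_num) (by norm_num)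
    rw [Nat.le_find_iff]
    intro m hm hne2
    exact hne2 (h m hm)

lemma apply_zero_eq_of_seqDist_le_half {x y : ℕ → A} (h : seqDist x y ≤ (2:ℝ)⁻¹) :
    x 0 = y 0 := by
  rw [seqDist] at h
  split at h
  · rename_i he; rw [he]
  · rename_i hne
    rcases Nat.eq_zero_or_pos (Nat.find (Function.ne_iff.mp hne)) with h0 | h0
    · rw [h0] at h; norm_num at h
    · have := Nat.find_min (Function.ne_iff.mp hne) h0
      simpa using this

end seqDistLemmas

section topo

variable {N : ℕ}

lemma cylO_prefW_mem_nhds (ω : ℕ → Fin N) (m : ℕ) : cylO (prefW ω m) ∈ nhds ω := by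
  have heq : cylO (prefW ω m) = Set.pi ((Finset.range m : Finset ℕ) : Set ℕ)
      (fun c => {ω c}) := by
    ext ω'
    simp [mem_cylO_prefW_iff, Set.mem_pi]
  rw [heq]
  exact set_pi_mem_nhds (Set.toFinite _)
    (fun c _ => by simp [isOpen_discrete, IsOpen.mem_nhds])

lemma exists_cylO_subset {ω : ℕ → Fin N} {U : Set (ℕ → Fin N)} (h : U ∈ nhds ω) :
    ∃ m, cylO (prefW ω m) ⊆ U := by
  rw [nhds_pi, Filter.mem_pi] at h
  obtain ⟨I, hIfin, t, ht, hsub⟩ := h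
  obtain ⟨b, hb⟩ := hIfin.bddAbove
  refine ⟨b + 1, fun ω' hω' => hsub fun i hi => ?_⟩
  have : ω' i = ω i := mem_cylO_prefW_iff.mp hω' i (by
    have := hb hi; omega)
  rw [this]
  exact mem_of_mem_nhds (ht i)

lemma cylO_prefW_mono {ω : ℕ → Fin N} {m m' : ℕ} (h : m ≤ m') :
    cylO (prefW ω m') ⊆ cylO (prefW ω m) := by
  intro ω' hω'
  rw [mem_cylO_prefW_iff] at *
  exact fun c hc => hω' c (lt_of_lt_of_le hc h)

end topo


section nw

variable {Y : Type*} [TopologicalSpace Y]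

lemma nonWanderingIn_subset (f : Y → Y) (K : Set Y) : nonWanderingIn f K ⊆ K :=
  fun _ hx => hx.1

lemma nonWanderingIn_mono {f : Y → Y} {K K' : Set Y} (h : K ⊆ K') {x : Y}
    (hx : x ∈ nonWanderingIn f K) : x ∈ nonWanderingIn f K' := by
  refine ⟨h hx.1, fun U hU => ?_⟩
  obtain ⟨n, hn, y, hy, hfy⟩ := hx.2 U hU
  exact ⟨n, hn, y, ⟨hy.1, h hy.2⟩, hfy.1, h hfy.2⟩

lemma isClosed_nonWanderingIn {f : Y → Y} {K : Set Y} (hK : IsClosed K) :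
    IsClosed (nonWanderingIn f K) := by
  rw [← isOpen_compl_iff]
  rw [isOpen_iff_mem_nhds]
  intro x hx
  by_cases hxK : x ∈ K
  · have : ¬ ∀ U ∈ nhds x, ∃ n > 0, ∃ y ∈ U ∩ K, f^[n] y ∈ U ∩ K := by
      intro hall
      exact hx ⟨hxK, hall⟩
    push_neg at this
    obtain ⟨U, hU, hno⟩ := this
    filter_upwards [interior_mem_nhds.mpr hU] with x' hx' hx'w
    obtain ⟨n, hn, y, hy, hfy⟩ := hx'w.2 (interior U)
      (IsOpen.mem_nhds isOpen_interior hx')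
    exact hno n hn y ⟨interior_subset hy.1, hy.2⟩ ⟨interior_subset hfy.1, hfy.2⟩
  · filter_upwards [hK.isOpen_compl.mem_nhds hxK] with x' hx' hx'w
    exact hx' hx'w.1

lemma nonWanderingIn_invariant {f : Y → Y} (hf : Continuous f) {K : Set Y}
    (hK : ∀ y ∈ K, f y ∈ K) {x : Y} (hx : x ∈ nonWanderingIn f K) :
    f x ∈ nonWanderingIn f K := by
  refine ⟨hK _ hx.1, fun U hU => ?_⟩
  obtain ⟨n, hn, y, hy, hfy⟩ := hx.2 (f ⁻¹' U) (hf.continuousAt.preimage_mem_nhds hU)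
  have hco : f^[n] (f y) = f (f^[n] y) := by
    rw [← Function.iterate_succ_apply, Function.iterate_succ_apply']
  refine ⟨n, hn, f y, ⟨hy.1, hK _ hy.2⟩, ?_, ?_⟩
  · rw [hco]; exact hfy.1
  · rw [hco]; exact hK _ hfy.2

end nw


section joins

lemma mem_cylO_join : ∀ (ps : List (List A)) (y : ℕ → A),
    y ∈ cylO ps.flatten ↔ ∀ (i : ℕ) (h : i < ps.length),
      shift^[((ps.map List.length).take i).sum] y ∈ cylO ps[i] := by
  intro ps
  induction ps with
  | nil =>
    intro y
    constructor
    · intro _ i h; exact absurd h (by simp)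
    · intro _; rw [mem_cylO_iff']; intro k hk; simp at hk
  | cons p ps IH =>
    intro y
    have hjc : (p :: ps).flatten = p ++ ps.flatten := rfl
    rw [hjc, cylO_append, IH]
    constructor
    · rintro ⟨h1, h2⟩ i hi
      match i with
      | 0 => simpa using h1
      | (i + 1) =>
        have hi' : i < ps.length := by simpa using hi
        have h3 := h2 i hi'
        rw [← Function.iterate_add_apply] at h3
        have hTake : ((List.map List.length (p :: ps)).take (i+1)).sum
            = (List.take i (List.map List.length ps)).sum + p.length := by
          rw [List.map_cons, List.take_succ_cons, List.sum_cons, Nat.add_comm]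
        have hGet : (p :: ps)[i+1]'hi = ps[i]'hi' := rfl
        rw [hTake, hGet]
        exact h3
    · intro h
      refine ⟨by exact h 0 (by simp), fun i hi => ?_⟩
      have h3 := h (i + 1) (by simpa using hi)
      have hTake : ((List.map List.length (p :: ps)).take (i+1)).sum
          = (List.take i (List.map List.length ps)).sum + p.length := by
        rw [List.map_cons, List.take_succ_cons, List.sum_cons, Nat.add_comm]
      have hib : i + 1 < (p :: ps).length := by simpa using Nat.succ_lt_succ hi
      have hGet : (p :: ps)[i+1]'hib = ps[i]'hi := rfl
      rw [hTake, hGet] at h3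
      rw [← Function.iterate_add_apply]
      exact h3

variable {k : ℕ}

lemma take_sum_eq (w v : Fin k → List A) (i : ℕ) (hik : i < k) :
    (((List.ofFn fun t : Fin k => if (t:ℕ) = k - 1 then w t else w t ++ v t).map
      List.length).take i).sum
    = ∑ t ∈ Finset.Iio (⟨i, hik⟩ : Fin k), ((w t).length + (v t).length) := by
  rw [List.map_ofFn, List.sum_take_ofFn]
  have hset : Finset.filter (fun t : Fin k => (t:ℕ) < i) Finset.univ
      = Finset.Iio (⟨i, hik⟩ : Fin k) := by
    ext t; simp [Fin.lt_def]
  rw [hset]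
  refine Finset.sum_congr rfl fun t ht => ?_
  have htj : (t:ℕ) < i := by simpa [Fin.lt_def] using Finset.mem_Iio.mp ht
  have hne : (t:ℕ) ≠ k - 1 := by omega
  simp [Function.comp, hne]

lemma mem_cylO_joinWords (w v : Fin k → List A) (y : ℕ → A) :
    y ∈ cylO (joinWords w v) ↔ ∀ j : Fin k,
      shift^[∑ t ∈ Finset.Iio j, ((w t).length + (v t).length)] y ∈
        cylO (if (j:ℕ) = k - 1 then w j else w j ++ v j) := by
  rw [joinWords, mem_cylO_join]
  constructor
  · intro h j
    have h3 := h (j:ℕ) (by simp)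
    rw [take_sum_eq w v (j:ℕ) j.isLt] at h3
    simpa using h3
  · intro h i hi
    have hik : i < k := by simpa using hi
    have h3 := h ⟨i, hik⟩
    rw [take_sum_eq w v i hik]
    simpa using h3

end joins


section gapSumFacts

variable {k : ℕ} (n Ms : Fin k → ℕ)

lemma gapSum_zero (hk : 0 < k) : gapSum n Ms ⟨0, hk⟩ = 0 := by
  have : Finset.Iio (⟨0, hk⟩ : Fin k) = ∅ := by
    ext t; simp [Finset.mem_Iio, Fin.lt_def]
  rw [gapSum, this, Finset.sum_empty]

lemma gapSum_succ {a : ℕ} (ha : a + 1 < k) :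
    gapSum n Ms ⟨a + 1, ha⟩
      = gapSum n Ms ⟨a, by omega⟩ + (n ⟨a, by omega⟩ + Ms ⟨a, by omega⟩) := by
  have hins : Finset.Iio (⟨a + 1, ha⟩ : Fin k)
      = insert (⟨a, by omega⟩ : Fin k) (Finset.Iio (⟨a, by omega⟩ : Fin k)) := by
    ext t
    simp only [Finset.mem_Iio, Finset.mem_insert, Fin.lt_def, Fin.ext_iff]
    omega
  rw [gapSum, hins, Finset.sum_insert (by simp [Finset.mem_Iio])]
  rw [gapSum]
  omega

lemma gapSum_lower {L : ℕ} {a : ℕ} (ha : a < k) :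
    L * a ≤ gapSum (fun _ => L) Ms ⟨a, ha⟩ := by
  induction a with
  | zero => simp
  | succ a ih =>
    rw [gapSum_succ]
    have := ih (by omega)
    have hmul : L * (a + 1) = L * a + L := by ring
    omega

end gapSumFacts

section claimB

variable {N q : ℕ} {X : Set (ℕ → Fin N)} {Xs : Fin q → Set (ℕ → Fin N)}

lemma claimB
    (hXcl : IsClosed X)
    (hXinv : ∀ ω ∈ X, shift ω ∈ X)
    (hΩ : nonWanderingIn shift X = ⋃ i, Xs i)
    (hXsinv : ∀ i, ∀ ω ∈ Xs i, shift ω ∈ Xs i)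
    {M : ℕ}
    (hspec : ∀ (k : ℕ) (idx : Fin k → Fin q), Monotone idx →
      ∀ x : Fin k → (ℕ → Fin N), (∀ j, x j ∈ Xs (idx j)) →
      ∀ n : Fin k → ℕ, (∀ j, 1 ≤ n j) →
      ∃ y ∈ X, ∃ Ms : Fin k → ℕ, (∀ t, Ms t ≤ M) ∧
        ∀ (j : Fin k), ∀ i < n j,
          seqDist (shift^[i] (x j)) (shift^[i + gapSum n Ms j] y) ≤ (2:ℝ)⁻¹)
    {i : Fin q} {x : ℕ → Fin N} (hx : x ∈ Xs i) (R : ℕ) :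
    ∃ j : Fin q, ∃ m, 0 < m ∧ ∃ y ∈ Xs j,
      (∀ c < R, y c = x c) ∧ (∀ c < R, (shift^[m] y) c = x c) := by
  classical
  set L := R + 1 with hL
  have hL1 : 1 ≤ L := by omega
  -- spec outputs for k copies of x with block length L
  have H : ∀ k : ℕ, ∃ y, y ∈ X ∧ ∃ Ms : Fin k → ℕ, (∀ t, Ms t ≤ M) ∧
      ∀ (j : Fin k), ∀ c < L,
        seqDist (shift^[c] x) (shift^[c + gapSum (fun _ => L) Ms j] y) ≤ (2:ℝ)⁻¹ := by
    intro k
    obtain ⟨y, hyX, Ms, hMs, hsh⟩ := hspec k (fun _ => i) monotone_const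
      (fun _ => x) (fun _ => hx) (fun _ => L) (fun _ => hL1)
    exact ⟨y, hyX, Ms, hMs, hsh⟩
  choose y hyX Ms hMsb hsh using H
  set g : ∀ k : ℕ, Fin k → ℕ := fun k t => gapSum (fun _ => L) (Ms k) t with hg
  have hgz : ∀ (k : ℕ) (hk : 0 < k), g k ⟨0, hk⟩ = 0 :=
    fun k hk => gapSum_zero _ _ hk
  have hgsucc : ∀ (k a : ℕ) (ha : a + 1 < k),
      g k ⟨a + 1, ha⟩ = g k ⟨a, by omega⟩ + (L + Ms k ⟨a, by omega⟩) :=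
    fun k a ha => gapSum_succ _ _ ha
  have hglow : ∀ (k a : ℕ) (ha : a < k), L * a ≤ g k ⟨a, ha⟩ :=
    fun k a ha => gapSum_lower _ ha
  have hoccY : ∀ (k : ℕ) (t : Fin k), ∀ c < L, y k (g k t + c) = x c := by
    intro k t c hc
    have h1 := apply_zero_eq_of_seqDist_le_half (hsh k t c hc)
    rw [shift_iter, shift_iter] at h1
    have h2 : c + g k t + 0 = g k t + c := by omega
    rw [h2] at h1
    rw [← h1]
    norm_num
  -- step 1 : a cluster point z of the y k
  obtain ⟨z, hz⟩ := exists_clusterPt_of_compactSpace (Filter.map y Filter.atTop)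
  have hfreq : ∀ U ∈ nhds z, ∀ K : ℕ, ∃ k ≥ K, y k ∈ U := by
    intro U hU K
    have h1 : MapClusterPt z Filter.atTop y := hz
    exact Filter.frequently_atTop.mp (mapClusterPt_iff_frequently.mp h1 U hU) K
  have hzX : z ∈ X := by
    rw [← hXcl.closure_eq]
    rw [mem_closure_iff_nhds]
    intro U hU
    obtain ⟨k, _, hk⟩ := hfreq U hU 0
    exact ⟨y k, hk, hyX k⟩
  -- occurrence structure of z
  have hQ : ∀ B : ℕ, ∃ r, B ≤ r ∧ (∀ c < L, z (r + c) = x c) ∧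
      ∃ m, 1 ≤ m ∧ m ≤ L + M ∧ ∀ c < L, z (r + m + c) = x c := by
    intro B
    set P := B + 3 * L + 2 * M + 1 with hP
    obtain ⟨k, hkK, hkmem⟩ := hfreq (cylO (prefW z P)) (cylO_prefW_mem_nhds z P)
      (B + L + M + 2)
    have hagree : ∀ c < P, y k c = z c := fun c hc => mem_cylO_prefW_iff.mp hkmem c hc
    have hkpos : 0 < k := by omega
    -- lower bounds for g
    have hlow : ∀ (a : ℕ) (ha : a < k), L * a ≤ g k ⟨a, ha⟩ := hglow k
    -- find the first block with offset ≥ B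
    have hQex : ∃ a : ℕ, ∃ ha : a < k, B ≤ g k ⟨a, ha⟩ := by
      refine ⟨k - 1, by omega, ?_⟩
      have h1 := hlow (k - 1) (by omega)
      have h2 : k - 1 ≤ L * (k - 1) := Nat.le_mul_of_pos_left _ (by omega)
      omega
    classical
    set n₀ := Nat.find hQex with hn₀
    obtain ⟨hn₀k, hBg⟩ := Nat.find_spec hQex
    have hupper : g k ⟨n₀, hn₀k⟩ ≤ B + L + M := by
      rcases Nat.eq_zero_or_pos n₀ with h0 | h0
      · have heq : (⟨n₀, hn₀k⟩ : Fin k) = ⟨0, hkpos⟩ := by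
          simp [Fin.ext_iff, h0]
        rw [heq, hgz k hkpos]
        omega
      · obtain ⟨a, ha⟩ : ∃ a, n₀ = a + 1 := ⟨n₀ - 1, by omega⟩
        have ha1 : a + 1 < k := by omega
        have hak : a < k := by omega
        have hmin := Nat.find_min hQex (show a < n₀ by omega)
        push_neg at hmin
        have hlt : g k ⟨a, hak⟩ < B := hmin hak
        have hstep : g k ⟨a + 1, ha1⟩
            = g k ⟨a, by omega⟩ + (L + Ms k ⟨a, by omega⟩) :=
          hgsucc k a ha1
        have heq : (⟨n₀, hn₀k⟩ : Fin k) = ⟨a + 1, ha1⟩ := by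
          simp [Fin.ext_iff, ha]
        have hMB := hMsb k ⟨a, hak⟩
        rw [heq, hstep]
        omega
    have hn₀k1 : n₀ + 1 < k := by
      by_contra hcon
      have heq : (⟨n₀, hn₀k⟩ : Fin k) = ⟨k - 1, by omega⟩ := by
        simp [Fin.ext_iff]; omega
      have h1 : L * (k - 1) ≤ g k ⟨n₀, hn₀k⟩ := by
        rw [heq]; exact hlow _ _
      have h2 : k - 1 ≤ L * (k - 1) := Nat.le_mul_of_pos_left _ (by omega)
      omega
    refine ⟨g k ⟨n₀, hn₀k⟩, hBg, ?_, L + Ms k ⟨n₀, hn₀k⟩, by omega,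
      by have := hMsb k ⟨n₀, hn₀k⟩; omega, ?_⟩
    · intro c hc
      have h1 := hoccY k ⟨n₀, hn₀k⟩ c hc
      rw [← hagree _ (by omega)]
      exact h1
    · intro c hc
      have hstep : g k ⟨n₀ + 1, hn₀k1⟩
          = g k ⟨n₀, hn₀k⟩ + (L + Ms k ⟨n₀, hn₀k⟩) := hgsucc k n₀ hn₀k1
      have h1 := hoccY k ⟨n₀ + 1, hn₀k1⟩ c hc
      rw [hstep] at h1
      have hMsB := hMsb k ⟨n₀, hn₀k⟩
      rw [← hagree _ (by omega)]
      exact h1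
  -- step 2 : choose returns and pigeonhole the gap value
  choose r hrB hocc1 m hm1 hmLM hocc2 using hQ
  have hmbd : ∀ B, m B < L + M + 1 := fun B => by have := hmLM B; omega
  obtain ⟨mhat, hmhat⟩ := Finite.exists_infinite_fiber (fun B => (⟨m B, hmbd B⟩ : Fin (L + M + 1)))
  set S : Set ℕ := (fun B => (⟨m B, hmbd B⟩ : Fin (L + M + 1))) ⁻¹' {mhat} with hS
  have hSinf : S.Infinite := Set.infinite_coe_iff.mp hmhat
  have hSm : ∀ B ∈ S, m B = (mhat : ℕ) := by
    intro B hB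
    have : (⟨m B, hmbd B⟩ : Fin (L + M + 1)) = mhat := hB
    exact congrArg Fin.val this
  obtain ⟨B₀, hB₀, _⟩ := hSinf.exists_gt 0
  have hmhat1 : 1 ≤ (mhat : ℕ) := by rw [← hSm B₀ hB₀]; exact hm1 B₀
  set u : ℕ → (ℕ → Fin N) := fun B => shift^[r B] z with hu
  have hFne : Filter.NeBot (Filter.atTop ⊓ 𝓟 S) := by
    rw [Filter.inf_principal_neBot_iff]
    intro U hU
    rw [Filter.mem_atTop_sets] at hU
    obtain ⟨a, ha⟩ := hU
    obtain ⟨b, hbS, hab⟩ := hSinf.exists_gt a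
    exact ⟨b, ha b (by omega), hbS⟩
  obtain ⟨zs, hzs⟩ := exists_clusterPt_of_compactSpace
    (Filter.map u (Filter.atTop ⊓ 𝓟 S))
  have hfreqs : ∀ V ∈ nhds zs, ∀ K : ℕ, ∃ B ≥ K, B ∈ S ∧ u B ∈ V := by
    intro V hV K
    have h1 : MapClusterPt zs (Filter.atTop ⊓ 𝓟 S) u := hzs
    have h2 := mapClusterPt_iff_frequently.mp h1 V hV
    rw [Filter.frequently_inf_principal] at h2
    rw [Filter.frequently_atTop] at h2
    obtain ⟨B, hBK, hBS, hBV⟩ := h2 K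
    exact ⟨B, hBK, hBS, hBV⟩
  have huX : ∀ B, u B ∈ X := fun B => mem_iter_of_inv hXinv hzX _
  -- (i) zs starts with x's prefix of length L
  have hi1 : ∀ c < L, zs c = x c := by
    intro c hc
    obtain ⟨B, _, _, hBV⟩ := hfreqs (cylO (prefW zs L)) (cylO_prefW_mem_nhds zs L) 0
    have h1 := mem_cylO_prefW_iff.mp hBV c hc
    rw [← h1, hu]
    simp only []
    rw [shift_iter]
    exact hocc1 B c hc
  -- (ii) the return
  have hi2 : ∀ c < L, zs ((mhat : ℕ) + c) = x c := by
    intro c hc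
    obtain ⟨B, _, hBS, hBV⟩ := hfreqs (cylO (prefW zs ((mhat : ℕ) + L)))
      (cylO_prefW_mem_nhds zs _) 0
    have h1 := mem_cylO_prefW_iff.mp hBV ((mhat : ℕ) + c) (by omega)
    rw [← h1, hu]
    simp only []
    rw [shift_iter]
    have h2 := hocc2 B c hc
    rw [hSm B hBS] at h2
    rw [← h2]
    congr 1
    omega
  -- (iii)–(iv) zs is non-wandering in X
  have hzsX : zs ∈ X := by
    rw [← hXcl.closure_eq, mem_closure_iff_nhds]
    intro V hV
    obtain ⟨B, _, _, hBV⟩ := hfreqs V hV 0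
    exact ⟨u B, hBV, huX B⟩
  have hzsNW : zs ∈ nonWanderingIn shift X := by
    refine ⟨hzsX, fun U hU => ?_⟩
    obtain ⟨B₁, _, _, hB₁V⟩ := hfreqs U hU 0
    obtain ⟨B₂, hB₂K, _, hB₂V⟩ := hfreqs U hU (r B₁ + 1)
    have hrlt : r B₁ < r B₂ := by
      have := hrB B₂
      omega
    refine ⟨r B₂ - r B₁, by omega, u B₁, ⟨hB₁V, huX B₁⟩, ?_, ?_⟩
    · have h1 : shift^[r B₂ - r B₁] (u B₁) = u B₂ := by
        rw [hu]
        simp only []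
        rw [← Function.iterate_add_apply]
        congr 1
        omega
      rw [h1]; exact hB₂V
    · have h1 : shift^[r B₂ - r B₁] (u B₁) = u B₂ := by
        rw [hu]
        simp only []
        rw [← Function.iterate_add_apply]
        congr 1
        omega
      rw [h1]; exact huX B₂
  rw [hΩ] at hzsNW
  obtain ⟨j, hj⟩ := Set.mem_iUnion.mp hzsNW
  refine ⟨j, (mhat : ℕ), by omega, zs, hj, ?_, ?_⟩
  · intro c hc
    exact hi1 c (by omega)
  · intro c hc
    rw [shift_iter]
    exact hi2 c (by omega)

end claimB


section claimA

variable {N q : ℕ} {X : Set (ℕ → Fin N)} {Xs : Fin q → Set (ℕ → Fin N)}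

lemma continuous_shift : Continuous (shift : (ℕ → Fin N) → (ℕ → Fin N)) :=
  continuous_pi fun i => continuous_apply (i + 1)

lemma claimA
    (hXcl : IsClosed X)
    (hXinv : ∀ ω ∈ X, shift ω ∈ X)
    (hΩ : nonWanderingIn shift X = ⋃ i, Xs i)
    (hXssub : ∀ i, Xs i ⊆ X)
    (hXscl : ∀ i, IsClosed (Xs i))
    (hXsinv : ∀ i, ∀ ω ∈ Xs i, shift ω ∈ Xs i)
    {M : ℕ}
    (hspec : ∀ (k : ℕ) (idx : Fin k → Fin q), Monotone idx →
      ∀ x : Fin k → (ℕ → Fin N), (∀ j, x j ∈ Xs (idx j)) →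
      ∀ n : Fin k → ℕ, (∀ j, 1 ≤ n j) →
      ∃ y ∈ X, ∃ Ms : Fin k → ℕ, (∀ t, Ms t ≤ M) ∧
        ∀ (j : Fin k), ∀ i < n j,
          seqDist (shift^[i] (x j)) (shift^[i + gapSum n Ms j] y) ≤ (2:ℝ)⁻¹) :
    nonWanderingIn shift X = ⋃ i, nonWanderingIn shift (Xs i) := by
  apply Set.Subset.antisymm
  · intro x hxΩ
    have hxU : x ∈ ⋃ i, Xs i := hΩ ▸ hxΩ
    obtain ⟨i', hxi⟩ := Set.mem_iUnion.mp hxU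
    have hB : ∀ R : ℕ, ∃ j : Fin q, ∃ m, 0 < m ∧ ∃ y ∈ Xs j,
        (∀ c < R, y c = x c) ∧ (∀ c < R, (shift^[m] y) c = x c) :=
      fun R => claimB hXcl hXinv hΩ hXsinv hspec hxi R
    choose jf mf hm yf hyf hag1 hag2 using hB
    obtain ⟨j, hjinf⟩ := Finite.exists_infinite_fiber jf
    have hjI : Set.Infinite (jf ⁻¹' {j}) := Set.infinite_coe_iff.mp hjinf
    have hbig : ∀ R : ℕ, ∃ R', R ≤ R' ∧ jf R' = j := by
      intro R
      obtain ⟨b, hb, hba⟩ := hjI.exists_gt R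
      exact ⟨b, by omega, hb⟩
    have hxXj : x ∈ Xs j := by
      rw [← (hXscl j).closure_eq, mem_closure_iff_nhds]
      intro U hU
      obtain ⟨mm, hmm⟩ := exists_cylO_subset hU
      obtain ⟨R', hR', hjR'⟩ := hbig mm
      refine ⟨yf R', hmm ?_, ?_⟩
      · rw [mem_cylO_prefW_iff]
        intro c hc
        exact hag1 R' c (by omega)
      · rw [← hjR']; exact hyf R'
    refine Set.mem_iUnion.mpr ⟨j, hxXj, ?_⟩
    intro U hU
    obtain ⟨mm, hmm⟩ := exists_cylO_subset hU
    obtain ⟨R', hR', hjR'⟩ := hbig mm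
    have hyXj : yf R' ∈ Xs j := by rw [← hjR']; exact hyf R'
    refine ⟨mf R', hm R', yf R', ⟨hmm ?_, hyXj⟩, hmm ?_, ?_⟩
    · rw [mem_cylO_prefW_iff]
      intro c hc
      exact hag1 R' c (by omega)
    · rw [mem_cylO_prefW_iff]
      intro c hc
      exact hag2 R' c (by omega)
    · exact mem_iter_of_inv (hXsinv j) hyXj _
  · intro x hx
    obtain ⟨i, hxi⟩ := Set.mem_iUnion.mp hx
    exact nonWanderingIn_mono (hXssub i) hxi

lemma forwardGlue
    (hXinv : ∀ ω ∈ X, shift ω ∈ X)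
    {M : ℕ}
    (hspec : ∀ (k : ℕ) (idx : Fin k → Fin q), Monotone idx →
      ∀ x : Fin k → (ℕ → Fin N), (∀ j, x j ∈ Xs (idx j)) →
      ∀ n : Fin k → ℕ, (∀ j, 1 ≤ n j) →
      ∃ y ∈ X, ∃ Ms : Fin k → ℕ, (∀ t, Ms t ≤ M) ∧
        ∀ (j : Fin k), ∀ i < n j,
          seqDist (shift^[i] (x j)) (shift^[i + gapSum n Ms j] y) ≤ (2:ℝ)⁻¹)
    (k : ℕ) (idx : Fin k → Fin q) (hmono : Monotone idx)
    (w : Fin k → List (Fin N)) (hw : ∀ j, InLang (Xs (idx j)) (w j)) :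
    ∃ v : Fin k → List (Fin N),
      (∀ j : Fin k, (j : ℕ) < k - 1 → InLang X (v j) ∧ (v j).length ≤ M + 1) ∧
      InLang X (joinWords w v) := by
  classical
  have hx : ∀ j, ∃ xj, xj ∈ Xs (idx j) ∧ xj ∈ cylO (w j) := fun j => hw j
  choose x hxmem hxcyl using hx
  set n : Fin k → ℕ := fun j => (w j).length + 1 with hn
  obtain ⟨y, hyX, Ms, hMsb, hsh⟩ := hspec k idx hmono x hxmem n
    (fun j => Nat.succ_le_succ (Nat.zero_le _))
  have hocc : ∀ (j : Fin k), ∀ p < n j, y (gapSum n Ms j + p) = x j p := by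
    intro j p hp
    have h1 := apply_zero_eq_of_seqDist_le_half (hsh j p hp)
    rw [shift_iter, shift_iter] at h1
    have h2 : p + gapSum n Ms j + 0 = gapSum n Ms j + p := by omega
    rw [h2] at h1
    rw [← h1]
    norm_num
  set v : Fin k → List (Fin N) :=
    fun j => prefW (shift^[gapSum n Ms j + (w j).length] y) (Ms j + 1) with hv
  have hnj : ∀ j, n j = (w j).length + 1 := fun j => rfl
  have hvlen : ∀ j, (v j).length = Ms j + 1 := fun j => prefW_length _ _
  have hsum : ∀ j : Fin k,
      ∑ t ∈ Finset.Iio j, ((w t).length + (v t).length) = gapSum n Ms j := by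
    intro j
    rw [gapSum]
    refine Finset.sum_congr rfl fun t _ => ?_
    have h1 := hvlen t
    have h2 := hnj t
    omega
  have hwjcyl : ∀ j : Fin k, shift^[gapSum n Ms j] y ∈ cylO (w j) := by
    intro j
    rw [mem_cylO_iff']
    intro p hp
    rw [shift_iter]
    rw [hocc j p (by rw [hnj j]; omega)]
    exact mem_cylO_iff'.mp (hxcyl j) p hp
  refine ⟨v, fun j _ => ⟨⟨shift^[gapSum n Ms j + (w j).length] y,
      mem_iter_of_inv hXinv hyX _, self_mem_cylO_prefW _ _⟩, by
        rw [hvlen j]; exact Nat.succ_le_succ (hMsb j)⟩, y, hyX, ?_⟩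
  rw [mem_cylO_joinWords]
  intro j
  rw [hsum j]
  by_cases hj : (j : ℕ) = k - 1
  · rw [if_pos hj]
    exact hwjcyl j
  · rw [if_neg hj]
    rw [cylO_append]
    refine ⟨hwjcyl j, ?_⟩
    rw [mem_cylO_prefW_iff]
    intro c hc
    rw [← Function.iterate_add_apply, shift_iter, shift_iter]
    congr 1
    omega

end claimA


section backward

variable {N q : ℕ} {X : Set (ℕ → Fin N)} {Xs : Fin q → Set (ℕ → Fin N)}

lemma backwardSpec
    (hXinv : ∀ ω ∈ X, shift ω ∈ X)
    {M : ℕ}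
    (hglue : ∀ (k : ℕ) (idx : Fin k → Fin q), Monotone idx →
        ∀ w : Fin k → List (Fin N), (∀ j, InLang (Xs (idx j)) (w j)) →
        ∃ v : Fin k → List (Fin N),
          (∀ j : Fin k, (j : ℕ) < k - 1 → InLang X (v j) ∧ (v j).length ≤ M) ∧
          InLang X (joinWords w v))
    {ε : ℝ} (hε : 0 < ε) :
    ∃ M' : ℕ, ∀ (k : ℕ) (idx : Fin k → Fin q), Monotone idx →
      ∀ x : Fin k → (ℕ → Fin N), (∀ j, x j ∈ nonWanderingIn shift (Xs (idx j))) →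
      ∀ n : Fin k → ℕ, (∀ j, 1 ≤ n j) →
      ∃ y ∈ X, ∃ Ms : Fin k → ℕ, (∀ t, Ms t ≤ M') ∧
        ∀ (j : Fin k), ∀ i < n j,
          seqDist (shift^[i] (x j)) (shift^[i + gapSum n Ms j] y) ≤ ε := by
  classical
  obtain ⟨L, hLε⟩ := exists_pow_lt_of_lt_one hε (by norm_num : (2:ℝ)⁻¹ < 1)
  refine ⟨L + M, ?_⟩
  intro k idx hmono x hx n hn
  set w : Fin k → List (Fin N) := fun j => prefW (x j) (n j + L) with hwdef
  have hwLang : ∀ j, InLang (Xs (idx j)) (w j) :=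
    fun j => ⟨x j, (hx j).1, self_mem_cylO_prefW _ _⟩
  obtain ⟨v, hv, y, hyX, hycyl⟩ := hglue k idx hmono w hwLang
  set Ms : Fin k → ℕ := fun j => if (j : ℕ) < k - 1 then L + (v j).length else 0
    with hMsdef
  have hMsrfl : ∀ t : Fin k, Ms t = if (t : ℕ) < k - 1 then L + (v t).length else 0 :=
    fun t => rfl
  have hMsb : ∀ t, Ms t ≤ L + M := by
    intro t
    rw [hMsrfl]
    by_cases ht : (t : ℕ) < k - 1
    · rw [if_pos ht]
      have := (hv t ht).2
      omega
    · rw [if_neg ht]; omega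
  have hwlen : ∀ j, (w j).length = n j + L := fun j => prefW_length _ _
  have hoff : ∀ j : Fin k,
      ∑ t ∈ Finset.Iio j, ((w t).length + (v t).length) = gapSum n Ms j := by
    intro j
    rw [gapSum]
    refine Finset.sum_congr rfl fun t ht => ?_
    have htj : (t : ℕ) < (j : ℕ) := Fin.lt_def.mp (Finset.mem_Iio.mp ht)
    have htk : (t : ℕ) < k - 1 := by have := j.isLt; omega
    have hMst : Ms t = L + (v t).length := by rw [hMsrfl]; exact if_pos htk
    rw [hwlen t, hMst]
    omega
  have hblock : ∀ (j : Fin k), ∀ p < n j + L, y (gapSum n Ms j + p) = x j p := by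
    intro j p hp
    have h1 := (mem_cylO_joinWords w v y).mp hycyl j
    rw [hoff j] at h1
    have h2 : shift^[gapSum n Ms j] y ∈ cylO (w j) := by
      by_cases hj : (j : ℕ) = k - 1
      · rwa [if_pos hj] at h1
      · rw [if_neg hj] at h1
        exact (cylO_append.mp h1).1
    have h3 := mem_cylO_prefW_iff.mp h2 p hp
    rwa [shift_iter] at h3
  refine ⟨y, hyX, Ms, hMsb, ?_⟩
  intro j i hi
  have hagree : ∀ c < L, (shift^[i] (x j)) c = (shift^[i + gapSum n Ms j] y) c := by
    intro c hc
    rw [shift_iter, shift_iter]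
    have h1 := hblock j (i + c) (by omega)
    rw [← h1]
    congr 1
    omega
  calc seqDist (shift^[i] (x j)) (shift^[i + gapSum n Ms j] y)
      ≤ (2:ℝ)⁻¹ ^ L := seqDist_le_pow hagree
    _ ≤ ε := le_of_lt hLε

end backward

end OneWaySpecAux

open OneWaySpec in
/-- **Proposition 2.5 (2).** A subshift satisfies the one-way (W)-specification property iff
there are subshifts `X₁,…,X_q ⊆ X` and `M ≥ 0` with `Ω(σ|_X) = ⋃ Ω(σ|_{Xᵢ})` such that
words from the languages of the `Xᵢ` (taken in order) can be concatenated with connecting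
words of length at most `M` into a word of the language of `X`. -/
theorem subshift_one_way_W_spec_iff
    (N : ℕ) (X : Set (ℕ → Fin N)) (hXcl : IsClosed X)
    (hXinv : ∀ ω ∈ X, shift ω ∈ X) :
    OneWayWSpecOn (fun ω ω' : ℕ → Fin N => seqDist ω ω') shift X ↔
    ∃ (q : ℕ) (Xs : Fin q → Set (ℕ → Fin N)) (M : ℕ),
      (∀ i, Xs i ⊆ X) ∧ (∀ i, IsClosed (Xs i)) ∧
      (∀ i, ∀ ω ∈ Xs i, shift ω ∈ Xs i) ∧
      nonWanderingIn shift X = (⋃ i, nonWanderingIn shift (Xs i)) ∧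
      ∀ (k : ℕ) (idx : Fin k → Fin q), Monotone idx →
        ∀ w : Fin k → List (Fin N), (∀ j, InLang (Xs (idx j)) (w j)) →
        ∃ v : Fin k → List (Fin N),
          (∀ j : Fin k, (j : ℕ) < k - 1 → InLang X (v j) ∧ (v j).length ≤ M) ∧
          InLang X (joinWords w v) := by
  classical
  constructor
  · rintro ⟨q, Xs, hsub, hcomp, himg, hΩ, hspecε⟩
    obtain ⟨M, hspec⟩ := hspecε (2:ℝ)⁻¹ (by norm_num)
    have hinv : ∀ i, ∀ ω ∈ Xs i, shift ω ∈ Xs i := fun i ω hω => himg i ⟨ω, hω, rfl⟩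
    have hcl : ∀ i, IsClosed (Xs i) := fun i => (hcomp i).isClosed
    refine ⟨q, Xs, M + 1, hsub, hcl, hinv, ?_, ?_⟩
    · exact OneWaySpecAux.claimA hXcl hXinv hΩ hsub hcl hinv hspec
    · intro k idx hmono w hw
      exact OneWaySpecAux.forwardGlue hXinv hspec k idx hmono w hw
  · rintro ⟨q, Xs, M, hsub, hcl, hinv, hΩ, hglue⟩
    refine ⟨q, fun i => nonWanderingIn shift (Xs i),
      fun i => (OneWaySpecAux.nonWanderingIn_subset shift (Xs i)).trans (hsub i),
      fun i => (OneWaySpecAux.isClosed_nonWanderingIn (hcl i)).isCompact,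
      ?_, hΩ, ?_⟩
    · rintro i _ ⟨ω, hω, rfl⟩
      exact OneWaySpecAux.nonWanderingIn_invariant OneWaySpecAux.continuous_shift
        (hinv i) hω
    · intro ε hε
      exact OneWaySpecAux.backwardSpec hXinv hglue hε
end
end

section
/- Let (X,d) be a compact metric space, f : X → X continuous, (φ_k)_{k≥1} a sequence of nonzero continuous functions dense in C(X), and D(μ,ν) := Σ_{k=1}^∞ |∫φ_k dμ − ∫φ_k dν| / (2^{k+1} ‖φ_k‖_∞) the corresponding metric on Borel probability measures. Let ζ > 0, ε > 0, p ≥ 1, Borel probability measures μ_1,…,μ_p, reals a_1,…,a_p ∈ (0,1] with Σ_{i=1}^p a_i = 1, μ := Σ_{i=1}^p a_i μ_i, positive integers n, n_1,…,n_p, nonnegative integers M_1,…,M_{p−1}, and points x_1,…,x_p, x ∈ X. Assume: (i) for all z,w ∈ X, d(z,w) ≤ 2ε implies D(δ_z, δ_w) ≤ ζ; (ii) Σ_{i=1}^p |a_i − n_i/(n_1+⋯+n_p)| ≤ ζ; (iii) D( E_n(x), Σ_{i=1}^p (n_i/(n_1+⋯+n_p)) E_{n_i}(f^{Σ_{t=1}^{i−1}(n_t+M_t)}(x))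 ) ≤ ζ; (iv) D(E_{n_i}(x_i), μ_i) ≤ ζ for each 1 ≤ i ≤ p; (v) d(f^j(x_i), f^{j+Σ_{t=1}^{i−1}(n_t+M_t)}(x)) ≤ 2ε for all 0 ≤ j ≤ n_i−1 and 1 ≤ i ≤ p. Then D(μ, E_n(x)) ≤ 5ζ. -/
open MeasureTheory Filter Topology Set
open scoped ENNReal NNReal

attribute [local instance] Classical.propDecidable

noncomputable section

section AuxLemmas
open OneWaySpec

variable {X : Type*} [MetricSpace X] [CompactSpace X] [MeasurableSpace X] [BorelSpace X]

lemma aux_integrable (φ : C(X, ℝ)) (μ : Measure X) [IsFiniteMeasure μ] :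
    Integrable (fun x => φ x) μ :=
  φ.continuous.integrable_of_hasCompactSupport (HasCompactSupport.of_compactSpace _)

lemma aux_abs_integral_le (φ : C(X, ℝ)) (μ : Measure X) [IsProbabilityMeasure μ] :
    |∫ x, φ x ∂μ| ≤ ‖φ‖ := by
  have := norm_integral_le_of_norm_le_const (μ := μ) (f := fun x => φ x) (C := ‖φ‖)
    (Filter.Eventually.of_forall fun x => φ.norm_coe_le_norm x)
  simpa [Real.norm_eq_abs] using this

/-- The `k`-th term of the series defining `Dmeas`. -/
noncomputable def Dterm (φs : ℕ → C(X, ℝ)) (μ ν : Measure X) (k : ℕ) : ℝ :=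
  |(∫ x, φs k x ∂μ) - ∫ x, φs k x ∂ν| / (2 ^ (k + 2) * ‖φs k‖)

lemma Dmeas_eq_tsum (φs : ℕ → C(X, ℝ)) (μ ν : Measure X) :
    Dmeas φs μ ν = ∑' k, Dterm φs μ ν k := rfl

variable {φs : ℕ → C(X, ℝ)}

lemma Dterm_nonneg (μ ν : Measure X) (k : ℕ) : 0 ≤ Dterm φs μ ν k :=
  div_nonneg (abs_nonneg _) (by positivity)

lemma Dterm_le (hne : ∀ k, φs k ≠ 0) (μ ν : Measure X)
    [IsProbabilityMeasure μ] [IsProbabilityMeasure ν] (k : ℕ) :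
    Dterm φs μ ν k ≤ 1 / 2 / 2 ^ k := by
  have h0 : (0:ℝ) < ‖φs k‖ := norm_pos_iff.mpr (hne k)
  have h1 : |(∫ x, φs k x ∂μ) - ∫ x, φs k x ∂ν| ≤ 2 * ‖φs k‖ := by
    have := abs_sub (∫ x, φs k x ∂μ) (∫ x, φs k x ∂ν)
    have ha := aux_abs_integral_le (φs k) μ
    have hb := aux_abs_integral_le (φs k) ν
    linarith
  have h2 : (2 * ‖φs k‖) / (2 ^ (k + 2) * ‖φs k‖) = 1 / 2 / 2 ^ k := by
    have hk : (2:ℝ) ^ k ≠ 0 := by positivity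
    field_simp
    ring
  calc Dterm φs μ ν k ≤ (2 * ‖φs k‖) / (2 ^ (k + 2) * ‖φs k‖) :=
        div_le_div_of_nonneg_right h1 (by positivity)
    _ = 1 / 2 / 2 ^ k := h2

lemma summable_Dterm (hne : ∀ k, φs k ≠ 0) (μ ν : Measure X)
    [IsProbabilityMeasure μ] [IsProbabilityMeasure ν] :
    Summable (Dterm φs μ ν) :=
  Summable.of_nonneg_of_le (Dterm_nonneg μ ν) (Dterm_le hne μ ν) (summable_geometric_two' 1)

lemma Dmeas_symm (μ ν : Measure X) : Dmeas φs μ ν = Dmeas φs ν μ := by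
  unfold Dmeas
  exact tsum_congr fun k => by rw [abs_sub_comm]

lemma Dmeas_triangle (hne : ∀ k, φs k ≠ 0) (μ ν ρ : Measure X)
    [IsProbabilityMeasure μ] [IsProbabilityMeasure ν] [IsProbabilityMeasure ρ] :
    Dmeas φs μ ρ ≤ Dmeas φs μ ν + Dmeas φs ν ρ := by
  rw [Dmeas_eq_tsum, Dmeas_eq_tsum, Dmeas_eq_tsum,
    ← Summable.tsum_add (summable_Dterm hne μ ν) (summable_Dterm hne ν ρ)]
  refine Summable.tsum_le_tsum (fun k => ?_) (summable_Dterm hne μ ρ)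
    ((summable_Dterm hne μ ν).add (summable_Dterm hne ν ρ))
  have h0 : (0:ℝ) < 2 ^ (k + 2) * ‖φs k‖ := by
    have : (0:ℝ) < ‖φs k‖ := norm_pos_iff.mpr (hne k)
    positivity
  rw [Dterm, Dterm, Dterm, ← add_div]
  exact div_le_div_of_nonneg_right (abs_sub_le _ _ _) h0.le

lemma aux_integral_combo {ι : Type*} (s : Finset ι) (c : ι → ℝ) (hc : ∀ i ∈ s, 0 ≤ c i)
    (μ : ι → Measure X) [∀ i, IsFiniteMeasure (μ i)] (φ : C(X, ℝ)) :
    ∫ x, φ x ∂(∑ i ∈ s, ENNReal.ofReal (c i) • μ i) = ∑ i ∈ s, c i * ∫ x, φ x ∂(μ i) := by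
  rw [integral_finset_sum_measure
    (fun i _ => (aux_integrable φ (μ i)).smul_measure ENNReal.ofReal_ne_top)]
  refine Finset.sum_congr rfl fun i hi => ?_
  rw [integral_smul_measure, ENNReal.toReal_ofReal (hc i hi), smul_eq_mul]

lemma combo_isProb {ι : Type*} (s : Finset ι) (c : ι → ℝ) (hc : ∀ i ∈ s, 0 ≤ c i)
    (hsum : ∑ i ∈ s, c i = 1) (μ : ι → Measure X) [∀ i, IsProbabilityMeasure (μ i)] :
    IsProbabilityMeasure (∑ i ∈ s, ENNReal.ofReal (c i) • μ i) := by
  constructor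
  rw [Measure.finset_sum_apply]
  simp only [Measure.smul_apply, measure_univ, smul_eq_mul, mul_one]
  rw [← ENNReal.ofReal_sum_of_nonneg hc, hsum, ENNReal.ofReal_one]

lemma Dmeas_combo_le (hne : ∀ k, φs k ≠ 0) {ι : Type*} (s : Finset ι) (c : ι → ℝ)
    (hc : ∀ i ∈ s, 0 ≤ c i) (μ ν : ι → Measure X)
    [∀ i, IsProbabilityMeasure (μ i)] [∀ i, IsProbabilityMeasure (ν i)] :
    Dmeas φs (∑ i ∈ s, ENNReal.ofReal (c i) • μ i) (∑ i ∈ s, ENNReal.ofReal (c i) • ν i)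
      ≤ ∑ i ∈ s, c i * Dmeas φs (μ i) (ν i) := by
  have hS : ∀ i ∈ s, Summable (fun k => c i * Dterm φs (μ i) (ν i) k) :=
    fun i hi => (summable_Dterm hne (μ i) (ν i)).mul_left (c i)
  have hpt : ∀ k, Dterm φs (∑ i ∈ s, ENNReal.ofReal (c i) • μ i)
      (∑ i ∈ s, ENNReal.ofReal (c i) • ν i) k ≤ ∑ i ∈ s, c i * Dterm φs (μ i) (ν i) k := by
    intro k
    have h0 : (0:ℝ) < 2 ^ (k + 2) * ‖φs k‖ := by
      have : (0:ℝ) < ‖φs k‖ := norm_pos_iff.mpr (hne k)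
      positivity
    rw [Dterm, aux_integral_combo s c hc μ, aux_integral_combo s c hc ν, ← Finset.sum_sub_distrib]
    calc |∑ i ∈ s, (c i * ∫ x, φs k x ∂(μ i) - c i * ∫ x, φs k x ∂(ν i))| / (2 ^ (k + 2) * ‖φs k‖)
        ≤ (∑ i ∈ s, c i * |(∫ x, φs k x ∂(μ i)) - ∫ x, φs k x ∂(ν i)|) / (2 ^ (k + 2) * ‖φs k‖) := by
          apply div_le_div_of_nonneg_right ?_ h0.le
          refine (Finset.abs_sum_le_sum_abs _ _).trans (Finset.sum_le_sum fun i hi => ?_)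
          rw [← mul_sub, abs_mul, abs_of_nonneg (hc i hi)]
      _ = ∑ i ∈ s, c i * Dterm φs (μ i) (ν i) k := by
          rw [Finset.sum_div]
          exact Finset.sum_congr rfl fun i hi => by rw [Dterm, mul_div_assoc]
  rw [Dmeas_eq_tsum]
  calc ∑' k, Dterm φs _ _ k ≤ ∑' k, ∑ i ∈ s, c i * Dterm φs (μ i) (ν i) k := by
        refine Summable.tsum_le_tsum hpt ?_ (summable_sum hS)
        exact Summable.of_nonneg_of_le (fun k => Dterm_nonneg _ _ k) hpt (summable_sum hS)
    _ = ∑ i ∈ s, ∑' k, c i * Dterm φs (μ i) (ν i) k := Summable.tsum_finsetSum hS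
    _ = ∑ i ∈ s, c i * Dmeas φs (μ i) (ν i) := by
        exact Finset.sum_congr rfl fun i hi => by
          rw [Dmeas_eq_tsum, tsum_mul_left]

lemma Dmeas_weights_le (hne : ∀ k, φs k ≠ 0) {ι : Type*} (s : Finset ι) (a c : ι → ℝ)
    (ha : ∀ i ∈ s, 0 ≤ a i) (hc : ∀ i ∈ s, 0 ≤ c i) (μ : ι → Measure X)
    [∀ i, IsProbabilityMeasure (μ i)] :
    Dmeas φs (∑ i ∈ s, ENNReal.ofReal (a i) • μ i) (∑ i ∈ s, ENNReal.ofReal (c i) • μ i)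
      ≤ ∑ i ∈ s, |a i - c i| := by
  set S := ∑ i ∈ s, |a i - c i| with hSdef
  have hS0 : 0 ≤ S := Finset.sum_nonneg fun i _ => abs_nonneg _
  have hpt : ∀ k, Dterm φs (∑ i ∈ s, ENNReal.ofReal (a i) • μ i)
      (∑ i ∈ s, ENNReal.ofReal (c i) • μ i) k ≤ S / 2 / 2 ^ k := by
    intro k
    have h0 : (0:ℝ) < ‖φs k‖ := norm_pos_iff.mpr (hne k)
    have h1 : |∑ i ∈ s, (a i * ∫ x, φs k x ∂(μ i) - c i * ∫ x, φs k x ∂(μ i))|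
        ≤ S * ‖φs k‖ := by
      refine (Finset.abs_sum_le_sum_abs _ _).trans ?_
      rw [hSdef, Finset.sum_mul]
      refine Finset.sum_le_sum fun i hi => ?_
      rw [← sub_mul, abs_mul]
      exact mul_le_mul_of_nonneg_left (aux_abs_integral_le (φs k) (μ i)) (abs_nonneg _)
    rw [Dterm, aux_integral_combo s a ha μ, aux_integral_combo s c hc μ, ← Finset.sum_sub_distrib]
    calc _ ≤ (S * ‖φs k‖) / (2 ^ (k + 2) * ‖φs k‖) := by
          apply div_le_div_of_nonneg_right h1
          positivity
      _ = S / 2 ^ (k + 2) := by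
          rw [mul_div_mul_right _ _ h0.ne']
      _ ≤ S / 2 / 2 ^ k := by
          rw [div_div]
          apply div_le_div_of_nonneg_left hS0 (by positivity)
          calc (2:ℝ) * 2 ^ k ≤ 4 * 2 ^ k := by nlinarith [pow_pos (by norm_num : (0:ℝ) < 2) k]
            _ = 2 ^ (k + 2) := by ring
  calc Dmeas φs _ _ ≤ ∑' k, S / 2 / 2 ^ k := by
        rw [Dmeas_eq_tsum]
        exact Summable.tsum_le_tsum hpt
          (Summable.of_nonneg_of_le (fun k => Dterm_nonneg _ _ k) hpt (summable_geometric_two' S))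
          (summable_geometric_two' S)
    _ = S := tsum_geometric_two' S

lemma empMeas_eq_combo (f : X → X) (z : X) {n : ℕ} (hn : n ≠ 0) :
    empMeas f z n = ∑ j ∈ Finset.range n, ENNReal.ofReal ((n:ℝ)⁻¹) • Measure.dirac (f^[j] z) := by
  have : ENNReal.ofReal ((n:ℝ)⁻¹) = (n : ℝ≥0∞)⁻¹ := by
    rw [ENNReal.ofReal_inv_of_pos (by positivity), ENNReal.ofReal_natCast]
  rw [empMeas, Finset.smul_sum]
  exact Finset.sum_congr rfl fun j _ => by rw [this]

lemma Dmeas_emp_pair (hne : ∀ k, φs k ≠ 0) (f : X → X) (z w : X) {n : ℕ} (hn : n ≠ 0)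
    {ζ : ℝ} (h : ∀ j < n, Dmeas φs (Measure.dirac (f^[j] z)) (Measure.dirac (f^[j] w)) ≤ ζ) :
    Dmeas φs (empMeas f z n) (empMeas f w n) ≤ ζ := by
  have hn0 : (0:ℝ) < n := by positivity
  rw [empMeas_eq_combo f z hn, empMeas_eq_combo f w hn]
  calc Dmeas φs _ _ ≤ ∑ j ∈ Finset.range n, (n:ℝ)⁻¹ *
        Dmeas φs (Measure.dirac (f^[j] z)) (Measure.dirac (f^[j] w)) :=
        Dmeas_combo_le hne (Finset.range n) _ (fun i _ => by positivity) _ _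
    _ ≤ ∑ j ∈ Finset.range n, (n:ℝ)⁻¹ * ζ := by
        refine Finset.sum_le_sum fun j hj => ?_
        exact mul_le_mul_of_nonneg_left (h j (Finset.mem_range.mp hj)) (by positivity)
    _ = ζ := by
        rw [Finset.sum_const, Finset.card_range, nsmul_eq_mul]
        field_simp

end AuxLemmas

open OneWaySpec in
/-- **Lemma 4.2.** If `x` `2ε`-traces the orbit segments of points `xᵢ` whose empirical
measures are `ζ`-close to ergodic components `μᵢ` of `μ = ∑ aᵢ μᵢ`, then the empirical
measure `E_n(x)` is `5ζ`-close to `μ` in the metric `D`. -/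
theorem empirical_close_to_combination
    {X : Type*} [MetricSpace X] [CompactSpace X] [MeasurableSpace X] [BorelSpace X]
    (f : X → X) (hf : Continuous f)
    (φs : ℕ → C(X, ℝ)) (hne : ∀ k, φs k ≠ 0) (hdense : DenseRange φs)
    (ζ ε : ℝ) (hζ : 0 < ζ) (hε : 0 < ε)
    (p : ℕ) (hp : 1 ≤ p)
    (μi : Fin p → Measure X) (hμi : ∀ i, IsProbabilityMeasure (μi i))
    (a : Fin p → ℝ) (ha0 : ∀ i, 0 < a i) (ha1 : ∀ i, a i ≤ 1) (hasum : ∑ i, a i = 1)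
    (n : ℕ) (hn : 1 ≤ n) (ni : Fin p → ℕ) (hni : ∀ i, 1 ≤ ni i)
    (Ms : Fin p → ℕ) (xi : Fin p → X) (x : X)
    (h1 : ∀ z w : X, dist z w ≤ 2 * ε →
      Dmeas φs (Measure.dirac z) (Measure.dirac w) ≤ ζ)
    (h2 : ∑ i, |a i - (ni i : ℝ) / (∑ t, (ni t : ℝ))| ≤ ζ)
    (h3 : Dmeas φs (empMeas f x n)
        (∑ i, ENNReal.ofReal ((ni i : ℝ) / (∑ t, (ni t : ℝ))) •
          empMeas f (f^[gapSum ni Ms i] x) (ni i)) ≤ ζ)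
    (h4 : ∀ i, Dmeas φs (empMeas f (xi i) (ni i)) (μi i) ≤ ζ)
    (h5 : ∀ i : Fin p, ∀ j < ni i, dist (f^[j] (xi i)) (f^[j + gapSum ni Ms i] x) ≤ 2 * ε) :
    Dmeas φs (∑ i, ENNReal.ofReal (a i) • μi i) (empMeas f x n) ≤ 5 * ζ := by
  haveI : ∀ i, IsProbabilityMeasure (μi i) := hμi
  haveI : Nonempty (Fin p) := Fin.pos_iff_nonempty.mp hp
  set N : ℝ := ∑ t, (ni t : ℝ) with hNdef
  have hN : 0 < N :=
    Finset.sum_pos (fun i _ => by exact_mod_cast hni i) Finset.univ_nonempty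
  set c : Fin p → ℝ := fun i => (ni i : ℝ) / N with hcdef
  have hc0 : ∀ i ∈ (Finset.univ : Finset (Fin p)), 0 ≤ c i := fun i _ => by positivity
  have hcsum : ∑ i, c i = 1 := by
    rw [hcdef, ← Finset.sum_div, ← hNdef, div_self hN.ne']
  have ha0' : ∀ i ∈ (Finset.univ : Finset (Fin p)), 0 ≤ a i := fun i _ => (ha0 i).le
  -- the four measures in the chain
  set νa : Measure X := ∑ i, ENNReal.ofReal (a i) • μi i with hνa
  set ν1 : Measure X := ∑ i, ENNReal.ofReal (c i) • μi i with hν1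
  set ν2 : Measure X := ∑ i, ENNReal.ofReal (c i) • empMeas f (xi i) (ni i) with hν2
  set ν3 : Measure X := ∑ i, ENNReal.ofReal (c i) • empMeas f (f^[gapSum ni Ms i] x) (ni i)
    with hν3
  haveI hE : ∀ i, IsProbabilityMeasure (empMeas f (xi i) (ni i)) :=
    fun i => empMeas_isProbabilityMeasure f (xi i) (Nat.one_le_iff_ne_zero.mp (hni i))
  haveI hE' : ∀ i, IsProbabilityMeasure (empMeas f (f^[gapSum ni Ms i] x) (ni i)) :=
    fun i => empMeas_isProbabilityMeasure f _ (Nat.one_le_iff_ne_zero.mp (hni i))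
  haveI : IsProbabilityMeasure νa := combo_isProb Finset.univ a ha0' hasum μi
  haveI : IsProbabilityMeasure ν1 := combo_isProb Finset.univ c hc0 hcsum μi
  haveI : IsProbabilityMeasure ν2 := combo_isProb Finset.univ c hc0 hcsum _
  haveI : IsProbabilityMeasure ν3 := combo_isProb Finset.univ c hc0 hcsum _
  haveI : IsProbabilityMeasure (empMeas f x n) :=
    empMeas_isProbabilityMeasure f x (Nat.one_le_iff_ne_zero.mp hn)
  -- the four individual bounds
  have b1 : Dmeas φs νa ν1 ≤ ζ :=
    (Dmeas_weights_le hne Finset.univ a c ha0' hc0 μi).trans h2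
  have b2 : Dmeas φs ν1 ν2 ≤ ζ := by
    calc Dmeas φs ν1 ν2 ≤ ∑ i, c i * Dmeas φs (μi i) (empMeas f (xi i) (ni i)) :=
          Dmeas_combo_le hne Finset.univ c hc0 _ _
      _ ≤ ∑ i, c i * ζ := by
          refine Finset.sum_le_sum fun i _ => ?_
          rw [Dmeas_symm]
          exact mul_le_mul_of_nonneg_left (h4 i) (hc0 i (Finset.mem_univ i))
      _ = ζ := by rw [← Finset.sum_mul, hcsum, one_mul]
  have b3 : Dmeas φs ν2 ν3 ≤ ζ := by
    calc Dmeas φs ν2 ν3 ≤ ∑ i, c i *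
          Dmeas φs (empMeas f (xi i) (ni i)) (empMeas f (f^[gapSum ni Ms i] x) (ni i)) :=
          Dmeas_combo_le hne Finset.univ c hc0 _ _
      _ ≤ ∑ i, c i * ζ := by
          refine Finset.sum_le_sum fun i _ => ?_
          refine mul_le_mul_of_nonneg_left ?_ (hc0 i (Finset.mem_univ i))
          refine Dmeas_emp_pair hne f _ _ (Nat.one_le_iff_ne_zero.mp (hni i)) fun j hj => ?_
          have h5' := h5 i j hj
          rw [← Function.iterate_add_apply] at *
          exact h1 _ _ (by simpa [Function.iterate_add_apply] using h5 i j hj)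
      _ = ζ := by rw [← Finset.sum_mul, hcsum, one_mul]
  have b4 : Dmeas φs ν3 (empMeas f x n) ≤ ζ := by
    rw [Dmeas_symm]
    exact h3
  have t1 : Dmeas φs νa (empMeas f x n) ≤ Dmeas φs νa ν1 + Dmeas φs ν1 (empMeas f x n) :=
    Dmeas_triangle hne _ _ _
  have t2 : Dmeas φs ν1 (empMeas f x n) ≤ Dmeas φs ν1 ν2 + Dmeas φs ν2 (empMeas f x n) :=
    Dmeas_triangle hne _ _ _
  have t3 : Dmeas φs ν2 (empMeas f x n) ≤ Dmeas φs ν2 ν3 + Dmeas φs ν3 (empMeas f x n) :=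
    Dmeas_triangle hne _ _ _
  linarith
end
end

section
/- Let f : [0,1] → [0,1] be defined by f(x) = 3x for 0 ≤ x < 1/6, f(x) = 3x − 1/2 for 1/6 ≤ x < 1/2, f(x) = 3x − 1 for 1/2 ≤ x < 2/3, f(x) = 3x − 3/2 for 2/3 ≤ x < 5/6, and f(x) = 3x − 2 for 5/6 ≤ x ≤ 1, and let (Σ_f,σ) be its symbolic space on the alphabet {0,1,2,3,4}. Then Σ_f = { ω ∈ {0,1,2,3,4}^ℕ : there exists N ∈ ℕ ∪ {∞} such that ω_k ∈ {0,1} for all k < N, ω_k ∈ {2,3,4} for all k ≥ N, and if 0 < N < ∞ then ω_{N−1} = 1 } (equivalently, the language of Σ_f is the set of all subwords of words of the form w1v with w ∈ {0,1}^* and v ∈ {2,3,4}^*), and (Σ_f,σ) satisfies the one-way specification property with the sets X_1 = {0,1}^ℕ and X_2 = {2,3,4}^ℕ. -/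
open MeasureTheory Filter Topology Set
open scoped ENNReal NNReal

attribute [local instance] Classical.propDecidable

noncomputable section

namespace OneWaySpec

/-!
On its branch `I_s` the map is `y ↦ 3y - s/2`; branch `0` covers `(0, 1/2)`, branch `1` covers
`(0, 1)` and branches `2, 3, 4` cover `(1/2, 1)`. So `exMap` is a Markov map and `Σ_f` is the
Markov shift of these transitions: itineraries obey them, and every admissible word is realised
by pulling a fixed point back along inverse branches. Read off, the admissible sequences are a
`{0,1}`-word entering `{2,3,4}` only through a `1`. A point whose itinerary makes that switch never
returns close to itself, while both full shifts `X₁, X₂` consist of limits of periodic points; this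
gives `Ω(σ) = X₁ ∪ X₂`. For specification, copy the orbit segments one after another with one
free symbol in between, chosen `1` as long as the segments come from `X₁` and `2` afterwards.
-/

section Symbolic

variable {A : Type*}

def markovShift (R : A → A → Prop) : Set (ℕ → A) := {ω | ∀ k, R (ω k) (ω (k + 1))}

theorem isClosed_markovShift [TopologicalSpace A] [DiscreteTopology A] (R : A → A → Prop) :
    IsClosed (markovShift R) := by
  simp only [markovShift, ofPred_forall]
  exact isClosed_iInter fun k => (isClosed_discrete {p : A × A | R p.1 p.2}).preimage
    (f := fun ω : ℕ → A => (ω k, ω (k + 1))) (by fun_prop)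

theorem iterate_shift_apply (ω : ℕ → A) (n k : ℕ) : shift^[n] ω k = ω (k + n) := by
  induction n generalizing ω with
  | zero => rfl
  | succ n ih => rw [Function.iterate_succ_apply, ih]; rfl

theorem image_shift_setOf_forall_mem_subset (B : Set A) :
    shift '' {ω : ℕ → A | ∀ k, ω k ∈ B} ⊆ {ω | ∀ k, ω k ∈ B} := by
  rintro _ ⟨ω, hω, rfl⟩ k
  exact hω (k + 1)

theorem isCompact_setOf_forall_mem [TopologicalSpace A] {B : Set A} (hB : IsCompact B) :
    IsCompact {ω : ℕ → A | ∀ k, ω k ∈ B} := by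
  simpa only [Set.pi, mem_univ, true_imp_iff] using isCompact_univ_pi fun _ : ℕ => hB

theorem seqDist_le_of_eqOn [DecidableEq A] {u v : ℕ → A} {m : ℕ} (h : ∀ s < m, u s = v s) :
    seqDist u v ≤ 2⁻¹ ^ m := by
  unfold seqDist
  split_ifs with huv
  · positivity
  · refine pow_le_pow_of_le_one (by norm_num) (by norm_num) (not_lt.1 fun hlt => ?_)
    exact Nat.find_spec (Function.ne_iff.mp huv) (h _ hlt)

end Symbolic

theorem mem_nonWanderingIn_of_tendsto {Y : Type*} [TopologicalSpace Y] {f : Y → Y} {X : Set Y}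
    {x : Y} {u : ℕ → Y} (hx : x ∈ X) (hu : Tendsto u atTop (𝓝 x)) (huX : ∀ m, u m ∈ X)
    (hper : ∀ m, ∃ n > 0, f^[n] (u m) = u m) : x ∈ nonWanderingIn f X := by
  refine ⟨hx, fun U hU => ?_⟩
  obtain ⟨m, hm⟩ := (hu.eventually hU).exists
  obtain ⟨n, hn, hfix⟩ := hper m
  exact ⟨n, hn, u m, ⟨hm, huX m⟩, by rw [hfix]; exact ⟨hm, huX m⟩⟩

/-- Each point of a full shift is the limit of its periodizations `ω (k % (m + 1))`. -/
theorem setOf_forall_mem_subset_nonWanderingIn {A : Type*} [TopologicalSpace A] {B : Set A}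
    {X : Set (ℕ → A)} (hBX : {ω | ∀ k, ω k ∈ B} ⊆ X) :
    {ω | ∀ k, ω k ∈ B} ⊆ nonWanderingIn shift X := by
  intro ω hω
  refine mem_nonWanderingIn_of_tendsto (u := fun m k => ω (k % (m + 1))) (hBX hω)
    (tendsto_pi_nhds.2 fun k => tendsto_const_nhds.congr' ?_) (fun m => hBX fun k => hω _)
    fun m => ⟨m + 1, m.succ_pos, funext fun k => by rw [iterate_shift_apply, Nat.add_mod_right]⟩
  filter_upwards [eventually_gt_atTop k] with m hm
  rw [Nat.mod_eq_of_lt (by omega)]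

section Glue

theorem gapSum_add_eq_sum_Iic {k : ℕ} (n M : Fin k → ℕ) (j : Fin k) :
    gapSum n M j + (n j + M j) = ∑ t ∈ Finset.Iic j, (n t + M t) := by
  rw [gapSum, ← Finset.Iio_insert, Finset.sum_insert Finset.notMem_Iio_self, add_comm]

theorem gapSum_add_le_gapSum {k : ℕ} (n M : Fin k → ℕ) {i j : Fin k} (hij : i < j) :
    gapSum n M i + (n i + M i) ≤ gapSum n M j := by
  rw [gapSum_add_eq_sum_Iic]
  exact Finset.sum_le_sum_of_subset fun t ht =>
    Finset.mem_Iio.2 ((Finset.mem_Iic.1 ht).trans_lt hij)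

theorem exists_gapSum_split {k : ℕ} (n M : Fin k → ℕ) {low : Fin k → Prop}
    (hlow : Antitone low) : ∃ N, (∀ j, low j → gapSum n M j + (n j + M j) ≤ N) ∧
      ∀ j, ¬ low j → N ≤ gapSum n M j := by
  refine ⟨∑ t ∈ Finset.univ.filter low, (n t + M t), fun j hj => ?_, fun j hj => ?_⟩
  · rw [gapSum_add_eq_sum_Iic]
    exact Finset.sum_le_sum_of_subset fun t ht =>
      Finset.mem_filter.2 ⟨Finset.mem_univ t, hlow (Finset.mem_Iic.1 ht) hj⟩
  · exact Finset.sum_le_sum_of_subset fun t ht => Finset.mem_Iio.2 <|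
      lt_of_not_ge fun hjt => hj (hlow hjt (Finset.mem_filter.1 ht).2)

variable {A : Type*} {k : ℕ} (x : Fin k → ℕ → A) (n : Fin k → ℕ) (m : ℕ) (z : ℕ → A)

/-- Block `j` copies `n j + m` symbols of `x j` starting at `gapSum n (fun _ => m + 1) j`;
the one-symbol gaps and the tail are read off `z`. -/
def glue (p : ℕ) : A :=
  if h : ∃ j, gapSum n (fun _ => m + 1) j ≤ p ∧ p < gapSum n (fun _ => m + 1) j + (n j + m) then
    x h.choose (p - gapSum n (fun _ => m + 1) h.choose)
  else z p

theorem glue_cases (p : ℕ) :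
    ((∀ j, gapSum n (fun _ => m + 1) j ≤ p → gapSum n (fun _ => m + 1) j + (n j + m) ≤ p) ∧
      glue x n m z p = z p) ∨
    ∃ j, gapSum n (fun _ => m + 1) j ≤ p ∧ p < gapSum n (fun _ => m + 1) j + (n j + m) ∧
      glue x n m z p = x j (p - gapSum n (fun _ => m + 1) j) := by
  unfold glue
  split_ifs with h
  · exact Or.inr ⟨h.choose, h.choose_spec.1, h.choose_spec.2, rfl⟩
  · push Not at h
    exact Or.inl ⟨h, rfl⟩

theorem glue_gapSum_add {j : Fin k} {t : ℕ} (ht : t < n j + m) :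
    glue x n m z (gapSum n (fun _ => m + 1) j + t) = x j t := by
  rcases glue_cases x n m z (gapSum n (fun _ => m + 1) j + t) with ⟨h, -⟩ | ⟨i, hi, hit, h⟩
  · exact absurd (h j (Nat.le_add_right _ _)) (by omega)
  · obtain rfl : i = j := by
      by_contra hne
      rcases lt_or_gt_of_ne hne with hlt | hlt
      · have := gapSum_add_le_gapSum n (fun _ => m + 1) hlt; omega
      · have := gapSum_add_le_gapSum n (fun _ => m + 1) hlt; omega
    rw [h, Nat.add_sub_cancel_left]

theorem seqDist_iterate_shift_glue_le [DecidableEq A] (j : Fin k) {i : ℕ} (hi : i < n j) :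
    seqDist (shift^[i] (x j)) (shift^[i + gapSum n (fun _ => m + 1) j] (glue x n m z)) ≤
      2⁻¹ ^ m := by
  refine seqDist_le_of_eqOn fun s hs => ?_
  rw [iterate_shift_apply, iterate_shift_apply, ← add_assoc, add_comm (s + i),
    glue_gapSum_add x n m z (by omega)]

end Glue

section Branches

/-- `a6`, indexed by `ℕ` like the symbols. -/
def brk : ℕ → ℝ
  | 0 => 0
  | 1 => 1 / 6
  | 2 => 1 / 2
  | 3 => 2 / 3
  | 4 => 5 / 6
  | _ => 1

theorem brk_nonneg (s : ℕ) : 0 ≤ brk s := by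
  unfold brk; split <;> norm_num

theorem brk_le_one (s : ℕ) : brk s ≤ 1 := by
  unfold brk; split <;> norm_num

def InBranch (s : ℕ) (y : ℝ) : Prop := s ≤ 4 ∧ brk s < y ∧ y < brk (s + 1)

def exTrans (a b : ℕ) : Prop := a ≤ 4 ∧ (a = 0 → b ≤ 1) ∧ (2 ≤ a → 2 ≤ b)

variable {s s' : ℕ} {y z : ℝ}

theorem InBranch.mem_Icc (hy : InBranch s y) : y ∈ Icc 0 1 :=
  ⟨(brk_nonneg s).trans hy.2.1.le, hy.2.2.le.trans (brk_le_one _)⟩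

theorem symA_a6_of_inBranch (h : InBranch s y) : symA a6 y = s := by
  obtain ⟨hs, h1, h2⟩ := h
  have hfilter : Finset.univ.filter (fun i : Fin 6 => a6 i < y) =
      Finset.univ.filter (fun i : Fin 6 => (i : ℕ) ≤ s) := by
    ext i
    simp only [Finset.mem_filter, Finset.mem_univ, true_and]
    interval_cases s <;> fin_cases i <;> norm_num [a6, brk] at h1 h2 ⊢ <;> linarith
  rw [symA, hfilter]
  interval_cases s <;> decide

theorem exMap_of_inBranch (h : InBranch s y) : exMap y = 3 * y - s / 2 := by
  obtain ⟨hs, h1, h2⟩ := h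
  interval_cases s <;> norm_num [brk] at h1 h2 <;>
    (unfold exMap; split_ifs <;> first | (exfalso; linarith) | (push_cast; ring1))

theorem ne_a6_of_inBranch (h : InBranch s y) (i : Fin 6) : y ≠ a6 i := by
  obtain ⟨hs, h1, h2⟩ := h
  rintro rfl
  revert h1 h2
  interval_cases s <;> fin_cases i <;> norm_num [a6, brk]

theorem exists_inBranch (hy : y ∈ Icc 0 1) (hne : ∀ i : Fin 6, y ≠ a6 i) : ∃ s, InBranch s y := by
  simp only [a6, Fin.forall_fin_succ, Matrix.cons_val_zero, Matrix.cons_val_succ] at hne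
  obtain ⟨e0, e1, e2, e3, e4, e5, -⟩ := hne
  have h0 : 0 < y := hy.1.lt_of_ne (Ne.symm e0)
  have h5 : y < 1 := hy.2.lt_of_ne e5
  rcases e1.lt_or_gt with h1 | h1
  · exact ⟨0, by decide, h0, h1⟩
  rcases e2.lt_or_gt with h2 | h2
  · exact ⟨1, by decide, h1, h2⟩
  rcases e3.lt_or_gt with h3 | h3
  · exact ⟨2, by decide, h2, h3⟩
  rcases e4.lt_or_gt with h4 | h4
  · exact ⟨3, by decide, h3, h4⟩
  · exact ⟨4, by decide, h4, h5⟩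

theorem exMap_mem_Icc (hy : y ∈ Icc 0 1) : exMap y ∈ Icc 0 1 := by
  obtain ⟨h0, h1⟩ := hy
  unfold exMap
  split_ifs <;> constructor <;> linarith

theorem exTrans_of_inBranch (h : InBranch s y) (h' : InBranch s' (exMap y)) : exTrans s s' := by
  obtain ⟨hs', h1', h2'⟩ := h'
  rw [exMap_of_inBranch h] at h1' h2'
  obtain ⟨hs, h1, h2⟩ := h
  refine ⟨hs, fun h0 => ?_, fun h2 => ?_⟩ <;> interval_cases s <;> interval_cases s' <;>
    norm_num [brk] at * <;> linarith

theorem exists_inBranch_exMap_eq (hss' : exTrans s s') (h' : InBranch s' z) :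
    ∃ y, InBranch s y ∧ exMap y = z := by
  have hy : InBranch s ((z + s / 2) / 3) := by
    obtain ⟨hs', h1, h2⟩ := h'
    obtain ⟨hs, h0, h2⟩ := hss'
    refine ⟨hs, ?_⟩
    interval_cases s <;> interval_cases s' <;> norm_num [brk] at * <;> constructor <;> linarith
  refine ⟨_, hy, ?_⟩
  rw [exMap_of_inBranch hy]
  ring

end Branches

section SymbolicSpace

theorem inBranch_itinA {x : ℝ} (hx : x ∈ goodA a6 exMap) (k : ℕ) :
    InBranch (itinA a6 exMap x k) (exMap^[k] x) := by
  have hk : exMap^[k] x ∈ Icc 0 1 := MapsTo.iterate (fun _ => exMap_mem_Icc) k hx.1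
  obtain ⟨s, hs⟩ := exists_inBranch hk (hx.2 k)
  rwa [itinA, symA_a6_of_inBranch hs]

theorem itinA_mem_markovShift {x : ℝ} (hx : x ∈ goodA a6 exMap) :
    itinA a6 exMap x ∈ markovShift exTrans := fun k =>
  exTrans_of_inBranch (inBranch_itinA hx k)
    (by rw [← Function.iterate_succ_apply' exMap k x]; exact inBranch_itinA hx (k + 1))

theorem mem_goodA_of_exMap_mem {s : ℕ} {y : ℝ} (hy : InBranch s y)
    (h : exMap y ∈ goodA a6 exMap) : y ∈ goodA a6 exMap := by
  refine ⟨hy.mem_Icc, fun k i => ?_⟩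
  cases k with
  | zero => exact ne_a6_of_inBranch hy i
  | succ k => rw [Function.iterate_succ_apply]; exact h.2 k i

theorem mem_goodA_of_inBranch_of_isFixedPt {s : ℕ} {w : ℝ} (hw : InBranch s w)
    (hfix : exMap w = w) : w ∈ goodA a6 exMap :=
  ⟨hw.mem_Icc, fun k => by rw [Function.iterate_fixed hfix]; exact ne_a6_of_inBranch hw⟩

/-- Every branch contains a good point: a preimage of the fixed point `1/4` or `3/4`. -/
theorem exists_mem_goodA_inBranch {s : ℕ} (hs : s ≤ 4) : ∃ y ∈ goodA a6 exMap, InBranch s y := by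
  obtain ⟨s', w, hw, hfix, hss'⟩ : ∃ s' w, InBranch s' w ∧ exMap w = w ∧ exTrans s s' := by
    rcases Nat.lt_or_ge s 2 with hs2 | hs2
    · exact ⟨1, 1 / 4, by norm_num [InBranch, brk], by norm_num [exMap], hs, by omega, by omega⟩
    · exact ⟨3, 3 / 4, by norm_num [InBranch, brk], by norm_num [exMap], hs, by omega, by omega⟩
  obtain ⟨y, hy, rfl⟩ := exists_inBranch_exMap_eq hss' hw
  exact ⟨y, mem_goodA_of_exMap_mem hy (mem_goodA_of_inBranch_of_isFixedPt hw hfix), hy⟩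

theorem exists_mem_goodA_itinA_eqOn (m : ℕ) :
    ∀ ω ∈ markovShift exTrans, ∃ y ∈ goodA a6 exMap,
      InBranch (ω 0) y ∧ ∀ k < m, itinA a6 exMap y k = ω k := by
  induction m with
  | zero =>
    intro ω hω
    obtain ⟨y, hy, hyω⟩ := exists_mem_goodA_inBranch (hω 0).1
    exact ⟨y, hy, hyω, fun k hk => absurd hk k.not_lt_zero⟩
  | succ m ih =>
    intro ω hω
    obtain ⟨y', hy', hy'ω, hitin⟩ := ih (shift ω) fun k => hω (k + 1)
    obtain ⟨y, hyω, hyy'⟩ := exists_inBranch_exMap_eq (hω 0) hy'ω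
    refine ⟨y, mem_goodA_of_exMap_mem hyω (hyy' ▸ hy'), hyω, fun k hk => ?_⟩
    cases k with
    | zero => exact symA_a6_of_inBranch hyω
    | succ k =>
      rw [itinA, Function.iterate_succ_apply, hyy']
      exact hitin k (by omega)

theorem SigmaA_exMap_eq_markovShift : SigmaA (p := 5) a6 exMap = markovShift exTrans := by
  refine (closure_minimal ?_ (isClosed_markovShift _)).antisymm fun ω hω => ?_
  · rintro _ ⟨x, hx, rfl⟩
    exact itinA_mem_markovShift hx
  · choose y hy _ hyω using fun m => exists_mem_goodA_itinA_eqOn m ω hω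
    refine mem_closure_of_tendsto (f := fun m => itinA a6 exMap (y m)) (b := atTop)
      (tendsto_pi_nhds.2 fun k => tendsto_const_nhds.congr' ?_)
      (Eventually.of_forall fun m => ⟨y m, hy m, rfl⟩)
    filter_upwards [eventually_gt_atTop k] with m hm
    exact (hyω m k hm).symm

def exSigma : Set (ℕ → ℕ) :=
  {ω | (∃ N : ℕ, (∀ k < N, ω k = 0 ∨ ω k = 1) ∧ (∀ k, N ≤ k → ω k = 2 ∨ ω k = 3 ∨ ω k = 4) ∧
      (0 < N → ω (N - 1) = 1)) ∨ (∀ k, ω k = 0 ∨ ω k = 1)}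

theorem two_le_of_mem_markovShift {ω : ℕ → ℕ} (hω : ω ∈ markovShift exTrans) {N k : ℕ}
    (hN : 2 ≤ ω N) (hk : N ≤ k) : 2 ≤ ω k :=
  Nat.le_induction hN (fun k _ ih => (hω k).2.2 ih) k hk

theorem markovShift_exTrans_subset : markovShift exTrans ⊆ exSigma := by
  intro ω hω
  by_cases hlow : ∀ k, ω k ≤ 1
  · exact Or.inr fun k => by have := hlow k; omega
  push Not at hlow
  have hex : ∃ k, 2 ≤ ω k := hlow.imp fun _ h => h
  refine Or.inl ⟨Nat.find hex, fun k hk => ?_, fun k hk => ?_, fun hpos => ?_⟩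
  · have := Nat.find_min hex hk
    omega
  · have := two_le_of_mem_markovShift hω (Nat.find_spec hex) hk
    have := (hω k).1
    omega
  · have hprev := Nat.find_min hex (Nat.sub_one_lt_of_lt hpos)
    have hnext := Nat.find_spec hex
    have hstep := (hω (Nat.find hex - 1)).2.1
    rw [Nat.sub_add_cancel hpos] at hstep
    omega

theorem exSigma_subset_markovShift : exSigma ⊆ markovShift exTrans := by
  rintro ω (⟨N, hlow, hhigh, hlast⟩ | hall) k
  · rcases Nat.lt_or_ge (k + 1) N with hk | hk
    · have := hlow k (by omega)
      have := hlow (k + 1) hk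
      exact ⟨by omega, by omega, by omega⟩
    · have := hhigh (k + 1) hk
      rcases Nat.lt_or_ge k N with hk' | hk'
      · have := hlow k hk'
        have := hlast (by omega)
        obtain rfl : k = N - 1 := by omega
        exact ⟨by omega, by omega, by omega⟩
      · have := hhigh k hk'
        exact ⟨by omega, by omega, by omega⟩
  · have := hall k
    have := hall (k + 1)
    exact ⟨by omega, by omega, by omega⟩

theorem SigmaA_exMap_eq : SigmaA (p := 5) a6 exMap = exSigma :=
  SigmaA_exMap_eq_markovShift.trans (markovShift_exTrans_subset.antisymm exSigma_subset_markovShift)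

theorem setOf_zero_or_one_subset_exSigma : {ω : ℕ → ℕ | ∀ k, ω k = 0 ∨ ω k = 1} ⊆ exSigma :=
  fun _ hω => Or.inr hω

theorem setOf_two_or_three_or_four_subset_exSigma :
    {ω : ℕ → ℕ | ∀ k, ω k = 2 ∨ ω k = 3 ∨ ω k = 4} ⊆ exSigma :=
  fun _ hω => Or.inl ⟨0, fun k hk => absurd hk k.not_lt_zero, fun k _ => hω k,
    fun h => absurd h (lt_irrefl 0)⟩

end SymbolicSpace

/-- Once a symbol `≥ 2` occurs, all later symbols are `≥ 2`; so an itinerary passing from `1`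
to `{2,3,4}` at `N` cannot return to its own `N`-cylinder. -/
theorem nonWanderingIn_shift_SigmaA_exMap :
    nonWanderingIn shift (SigmaA (p := 5) a6 exMap) =
      {ω | ∀ k, ω k = 0 ∨ ω k = 1} ∪ {ω | ∀ k, ω k = 2 ∨ ω k = 3 ∨ ω k = 4} := by
  refine subset_antisymm ?_ (union_subset ?_ ?_)
  · rintro ω ⟨hωS, hω⟩
    rcases SigmaA_exMap_eq ▸ hωS with ⟨N, -, hhigh, hlast⟩ | hall
    · rcases Nat.eq_zero_or_pos N with rfl | hpos
      · exact Or.inr fun k => hhigh k k.zero_le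
      have hU : {y : ℕ → ℕ | y (N - 1) = ω (N - 1) ∧ y N = ω N} ∈ 𝓝 ω := by
        refine IsOpen.mem_nhds ?_ ⟨rfl, rfl⟩
        exact ((isOpen_discrete {ω (N - 1)}).preimage
          (f := fun y : ℕ → ℕ => y (N - 1)) (by fun_prop)).inter
          ((isOpen_discrete {ω N}).preimage (f := fun y : ℕ → ℕ => y N) (by fun_prop))
      obtain ⟨n, hn, y, ⟨⟨-, hyN⟩, hyS⟩, ⟨hyn, -⟩, -⟩ := hω _ hU
      rw [SigmaA_exMap_eq_markovShift] at hyS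
      have h2 := two_le_of_mem_markovShift hyS (N := N) (k := N - 1 + n)
        (by have := hhigh N le_rfl; omega) (by omega)
      rw [iterate_shift_apply, hlast hpos] at hyn
      omega
    · exact Or.inl hall
  · exact setOf_forall_mem_subset_nonWanderingIn (B := {0, 1})
      (SigmaA_exMap_eq ▸ setOf_zero_or_one_subset_exSigma)
  · exact setOf_forall_mem_subset_nonWanderingIn (B := {2, 3, 4})
      (SigmaA_exMap_eq ▸ setOf_two_or_three_or_four_subset_exSigma)

/-- `N` is the end of the last `X₁`-block, and the free symbol just before it is a `1`. -/
theorem glue_mem_exSigma {k : ℕ} {x : Fin k → ℕ → ℕ} {n : Fin k → ℕ} {m N : ℕ}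
    {low : Fin k → Prop} (hx₁ : ∀ j, low j → ∀ t, x j t = 0 ∨ x j t = 1)
    (hx₂ : ∀ j, ¬ low j → ∀ t, x j t = 2 ∨ x j t = 3 ∨ x j t = 4)
    (hlowN : ∀ j, low j → gapSum n (fun _ => m + 1) j + (n j + (m + 1)) ≤ N)
    (hhighN : ∀ j, ¬ low j → N ≤ gapSum n (fun _ => m + 1) j) :
    glue x n m (fun p => if p < N then 1 else 2) ∈ exSigma := by
  refine Or.inl ⟨N, fun p hp => ?_, fun p hp => ?_, fun hpos => ?_⟩
  · rcases glue_cases x n m _ p with ⟨-, h⟩ | ⟨j, hjp, -, h⟩ <;> rw [h]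
    · simp [hp]
    · by_cases hj : low j
      · exact hx₁ j hj _
      · exact absurd (hhighN j hj) (by omega)
  · rcases glue_cases x n m _ p with ⟨-, h⟩ | ⟨j, -, hpj, h⟩ <;> rw [h]
    · simp [not_lt.2 hp]
    · by_cases hj : low j
      · exact absurd (hlowN j hj) (by omega)
      · exact hx₂ j hj _
  · rcases glue_cases x n m _ (N - 1) with ⟨-, h⟩ | ⟨j, hjp, hpj, -⟩
    · rw [h, if_pos (by omega)]
    · by_cases hj : low j
      · have := hlowN j hj; omega
      · have := hhighN j hj; omega

end OneWaySpec

open OneWaySpec in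
/-- **Example 3.1.** The symbolic space of the five-branch map consists of the sequences
that are a `{0,1}`-word, followed (if the `{0,1}`-part is finite and nonempty then ending
with the symbol `1`) by a `{2,3,4}`-sequence; and it satisfies the one-way specification
property with `X₁ = {0,1}^ℕ` and `X₂ = {2,3,4}^ℕ`. -/
theorem exMap_symbolic_space_and_spec :
    (SigmaA (p := 5) a6 exMap =
      {ω : ℕ → ℕ |
        (∃ N : ℕ, (∀ k < N, ω k = 0 ∨ ω k = 1) ∧
          (∀ k, N ≤ k → ω k = 2 ∨ ω k = 3 ∨ ω k = 4) ∧
          (0 < N → ω (N - 1) = 1)) ∨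
        (∀ k, ω k = 0 ∨ ω k = 1)}) ∧
    OneWaySpecWithOn (fun ω ω' : ℕ → ℕ => seqDist ω ω') shift (SigmaA (p := 5) a6 exMap)
      ![{ω : ℕ → ℕ | ∀ k, ω k = 0 ∨ ω k = 1},
        {ω : ℕ → ℕ | ∀ k, ω k = 2 ∨ ω k = 3 ∨ ω k = 4}] := by
  refine ⟨SigmaA_exMap_eq, ?_, ?_, ?_, ?_, ?_⟩
  · intro i
    fin_cases i
    · exact SigmaA_exMap_eq ▸ setOf_zero_or_one_subset_exSigma
    · exact SigmaA_exMap_eq ▸ setOf_two_or_three_or_four_subset_exSigma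
  · intro i
    fin_cases i
    · exact isCompact_setOf_forall_mem (B := {0, 1}) (Set.toFinite _).isCompact
    · exact isCompact_setOf_forall_mem (B := {2, 3, 4}) (Set.toFinite _).isCompact
  · intro i
    fin_cases i
    · exact image_shift_setOf_forall_mem_subset {0, 1}
    · exact image_shift_setOf_forall_mem_subset {2, 3, 4}
  · rw [nonWanderingIn_shift_SigmaA_exMap]
    ext ω
    simp only [mem_iUnion, Fin.exists_fin_two, Matrix.cons_val_zero, Matrix.cons_val_one,
      mem_union]
  · intro ε hε
    obtain ⟨m, hm⟩ := exists_pow_lt_of_lt_one hε (by norm_num : (2⁻¹ : ℝ) < 1)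
    refine ⟨m + 1, fun k idx hidx x hx n _ => ?_⟩
    have hlow : Antitone fun j => idx j = 0 := fun i j hij hj =>
      nonpos_iff_eq_zero.1 (hj ▸ hidx hij)
    obtain ⟨N, hlowN, hhighN⟩ := exists_gapSum_split n (fun _ => m + 1) hlow
    have hglue := glue_mem_exSigma (fun j hj => by simpa [hj] using hx j)
      (fun j hj => by simpa [Fin.eq_one_of_ne_zero _ hj] using hx j) hlowN hhighN
    exact ⟨_, SigmaA_exMap_eq ▸ hglue,
      fun j i hi => (seqDist_iterate_shift_glue_le x n m _ j hi).trans hm.le⟩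
end
end
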